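/- arXiv:math/0505351 — 9 statements merged into one kernel-verified Lean document; each statement's English description precedes it below -/
import Mathlib

section
/- Let Γ be a subgroup of ℤ^r with saturation Γ̄. Then the connected component of the identity element in the topological group T_Γ = {t ∈ (ℂˣ)^r : χ(t) = 1 for all χ ∈ Γ} is exactly T_{Γ̄} = {t : χ(t) = 1 for all χ ∈ Γ̄}; in particular T_{Γ̄} is connected. (Part of Proposition 3.1: the connected components of the common kernel of the characters in Γ are the cosets of the common kernel of the characters in Γ̄.) -/
/-- The character of the torus `T = (ℂˣ)^r` associated to `χ ∈ ℤ^r`: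
`t ↦ ∏ⱼ tⱼ^{χⱼ}`. -/
noncomputable def charMap {r : ℕ} (χ : Fin r → ℤ) (t : Fin r → ℂˣ) : ℂˣ :=
  ∏ j, (t j) ^ (χ j)

/-- For a subgroup `Γ ≤ ℤ^r`, the subgroup `T_Γ = {t ∈ T : χ(t) = 1 ∀ χ ∈ Γ}`. -/
def torusKer {r : ℕ} (Γ : AddSubgroup (Fin r → ℤ)) : Set (Fin r → ℂˣ) :=
  {t | ∀ χ ∈ Γ, charMap χ t = 1}

/-- The saturation `Γ̄ = {χ ∈ ℤ^r : mχ ∈ Γ for some m > 0}` of a subgroup `Γ ≤ ℤ^r`. -/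
def saturation {r : ℕ} (Γ : AddSubgroup (Fin r → ℤ)) : AddSubgroup (Fin r → ℤ) where
  carrier := {χ | ∃ m : ℤ, 0 < m ∧ m • χ ∈ Γ}
  zero_mem' := ⟨1, one_pos, by simpa using Γ.zero_mem⟩
  add_mem' := by
    rintro x y ⟨mx, hmx, hx⟩ ⟨my, hmy, hy⟩
    refine ⟨mx * my, mul_pos hmx hmy, ?_⟩
    have : (mx * my) • (x + y) = my • (mx • x) + mx • (my • y) := by
      rw [smul_add, smul_smul, smul_smul, mul_comm my mx]
    rw [this]
    exact Γ.add_mem (Γ.zsmul_mem hx my) (Γ.zsmul_mem hy mx)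
  neg_mem' := by
    rintro x ⟨m, hm, hx⟩
    exact ⟨m, hm, by simpa [smul_neg] using Γ.neg_mem hx⟩

/-! The saturation `Γ̄` is a direct summand of `ℤ^r`: in a Smith normal form basis `b` of `ℤ^r`
adapted to `Γ̄`, the subgroup `Γ̄` is spanned by some of the `b i`, because it contains every vector
of which it contains a nonzero multiple. The change of coordinates `t ↦ (χ_{b i}(t))ᵢ` is a
homeomorphism of `T` carrying `T_Γ̄` onto a coordinate subtorus, which is connected. On the other
hand each `χ ∈ Γ̄` takes values in a finite group of roots of unity on `T_Γ`, so `T_Γ̄`, being cut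
out by the finitely many characters `χ_{b i}`, is clopen in `T_Γ`. -/

open Set Set.Notation

section Characters

variable {r : ℕ}

theorem charMap_add (χ ψ : Fin r → ℤ) (t : Fin r → ℂˣ) :
    charMap (χ + ψ) t = charMap χ t * charMap ψ t := by
  simp only [charMap, Pi.add_apply, zpow_add, Finset.prod_mul_distrib]

noncomputable def charHom (t : Fin r → ℂˣ) : (Fin r → ℤ) →+ Additive ℂˣ where
  toFun χ := Additive.ofMul (charMap χ t)
  map_zero' := by simp [charMap]
  map_add' χ ψ := charMap_add χ ψ t

theorem charMap_zsmul (m : ℤ) (χ : Fin r → ℤ) (t : Fin r → ℂˣ) :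
    charMap (m • χ) t = charMap χ t ^ m :=
  congrArg Additive.toMul (map_zsmul (charHom t) m χ)

theorem charMap_single (j : Fin r) (t : Fin r → ℂˣ) : charMap (Pi.single j 1) t = t j := by
  rw [charMap, Finset.prod_eq_single j] <;> simp +contextual

theorem charMap_one (χ : Fin r → ℤ) : charMap χ 1 = 1 := by simp [charMap]

theorem continuous_charMap (χ : Fin r → ℤ) : Continuous (charMap χ) :=
  continuous_finsetProd _ fun j _ => (continuous_apply j).zpow (χ j)

theorem one_mem_torusKer (Γ : AddSubgroup (Fin r → ℤ)) : 1 ∈ torusKer Γ :=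
  fun χ _ => charMap_one χ

theorem torusKer_anti {Γ Λ : AddSubgroup (Fin r → ℤ)} (h : Γ ≤ Λ) : torusKer Λ ⊆ torusKer Γ :=
  fun _ ht χ hχ => ht χ (h hχ)

theorem torusKer_closure (S : Set (Fin r → ℤ)) :
    torusKer (AddSubgroup.closure S) = {t | ∀ χ ∈ S, charMap χ t = 1} :=
  ext fun t => AddSubgroup.closure_le (charHom t).ker

end Characters

section DualTorusMap

variable {r : ℕ}

noncomputable def dualTorusMap (A : (Fin r → ℤ) →+ (Fin r → ℤ)) (t : Fin r → ℂˣ) : Fin r → ℂˣ :=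
  fun j => charMap (A (Pi.single j 1)) t

theorem charHom_dualTorusMap (A : (Fin r → ℤ) →+ (Fin r → ℤ)) (t : Fin r → ℂˣ) :
    charHom (dualTorusMap A t) = (charHom t).comp A := by
  ext j : 2
  exact congrArg Additive.ofMul (charMap_single j _)

theorem charMap_dualTorusMap (A : (Fin r → ℤ) →+ (Fin r → ℤ)) (χ : Fin r → ℤ) (t : Fin r → ℂˣ) :
    charMap χ (dualTorusMap A t) = charMap (A χ) t :=
  congrArg Additive.toMul (DFunLike.congr_fun (charHom_dualTorusMap A t) χ)

theorem continuous_dualTorusMap (A : (Fin r → ℤ) →+ (Fin r → ℤ)) : Continuous (dualTorusMap A) :=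
  continuous_pi fun _ => continuous_charMap _

noncomputable def torusHomeomorph (e : (Fin r → ℤ) ≃+ (Fin r → ℤ)) :
    (Fin r → ℂˣ) ≃ₜ (Fin r → ℂˣ) where
  toFun := dualTorusMap e
  invFun := dualTorusMap e.symm
  left_inv t := funext fun j => by simp [dualTorusMap, charMap_dualTorusMap, charMap_single]
  right_inv t := funext fun j => by simp [dualTorusMap, charMap_dualTorusMap, charMap_single]
  continuous_toFun := continuous_dualTorusMap _
  continuous_invFun := continuous_dualTorusMap _

theorem isConnected_setOf_forall_mem_eq {ι : Type*} {X : ι → Type*} [∀ i, TopologicalSpace (X i)]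
    [∀ i, ConnectedSpace (X i)] (s : Set ι) (x : ∀ i, X i) :
    IsConnected {u : ∀ i, X i | ∀ i ∈ s, u i = x i} := by
  classical
  have : {u : ∀ i, X i | ∀ i ∈ s, u i = x i} = univ.pi fun i => if i ∈ s then {x i} else univ := by
    ext u
    simp only [mem_ofPred_eq, mem_univ_pi]
    refine forall_congr' fun i => ?_
    split_ifs with hi <;> simp [hi]
  rw [this, isConnected_univ_pi]
  intro i
  split_ifs
  exacts [isConnected_singleton, isConnected_univ]

theorem torusKer_closure_image_basis (b : Module.Basis (Fin r) ℤ (Fin r → ℤ)) (s : Set (Fin r)) :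
    torusKer (AddSubgroup.closure (b '' s)) =
      torusHomeomorph b.equivFun.symm.toAddEquiv ⁻¹' {u | ∀ j ∈ s, u j = 1} := by
  rw [torusKer_closure]
  ext t
  change (∀ χ ∈ b '' s, _) ↔ ∀ j ∈ s, charMap (b.equivFun.symm (Pi.single j 1)) t = 1
  simp only [forall_mem_image, Basis.equivFun_symm_single]

theorem isConnected_torusKer_closure_image_basis (b : Module.Basis (Fin r) ℤ (Fin r → ℤ))
    (s : Set (Fin r)) : IsConnected (torusKer (AddSubgroup.closure (b '' s))) := by
  rw [torusKer_closure_image_basis, Homeomorph.isConnected_preimage]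
  exact isConnected_setOf_forall_mem_eq s 1

end DualTorusMap

theorem Submodule.exists_basis_eq_span_image {R M ι : Type*} [CommRing R] [IsDomain R]
    [IsPrincipalIdealRing R] [AddCommGroup M] [Module R M] [Finite ι] (b : Module.Basis ι R M)
    (N : Submodule R M) (hN : ∀ (a : R) (x : M), a ≠ 0 → a • x ∈ N → x ∈ N) :
    ∃ (b' : Module.Basis ι R M) (s : Set ι), N = span R (b' '' s) := by
  obtain ⟨n, bM, bN, f, a, snf⟩ := N.smithNormalForm b
  refine ⟨bM, range f, le_antisymm ?_ ?_⟩
  · rw [← map_subtype_top N, ← bN.span_eq, map_span, ← range_comp, span_le]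
    rintro _ ⟨i, rfl⟩
    rw [Function.comp_apply, subtype_apply, snf]
    exact smul_mem _ _ (subset_span ⟨f i, mem_range_self i, rfl⟩)
  · rw [span_le]
    rintro _ ⟨_, ⟨i, rfl⟩, rfl⟩
    have ha : a i ≠ 0 := by
      rintro hai
      exact bN.ne_zero i (Subtype.ext (by rw [snf, hai, zero_smul, ZeroMemClass.coe_zero]))
    exact hN (a i) _ ha (snf i ▸ (bN i).2)

section Saturation

variable {r : ℕ}

theorem le_saturation (Γ : AddSubgroup (Fin r → ℤ)) : Γ ≤ saturation Γ :=
  fun χ hχ => ⟨1, one_pos, by rwa [one_smul]⟩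

theorem mem_saturation_of_zsmul_mem {Γ : AddSubgroup (Fin r → ℤ)} {m : ℤ} {χ : Fin r → ℤ}
    (hm : m ≠ 0) (h : m • χ ∈ saturation Γ) : χ ∈ saturation Γ := by
  obtain ⟨n, hn, hnm⟩ := h
  rw [smul_smul] at hnm
  refine ⟨|n * m|, abs_pos.mpr (mul_ne_zero hn.ne' hm), ?_⟩
  rcases abs_choice (n * m) with h | h <;> rw [h]
  · exact hnm
  · rw [neg_smul]; exact Γ.neg_mem hnm

theorem exists_basis_saturation_eq_closure (Γ : AddSubgroup (Fin r → ℤ)) :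
    ∃ (b : Module.Basis (Fin r) ℤ (Fin r → ℤ)) (s : Set (Fin r)),
      saturation Γ = AddSubgroup.closure (b '' s) := by
  obtain ⟨b, s, h⟩ := (saturation Γ).toIntSubmodule.exists_basis_eq_span_image
    (Pi.basisFun ℤ (Fin r)) fun _ _ => mem_saturation_of_zsmul_mem
  exact ⟨b, s, by rw [← Submodule.span_int_eq_addSubgroupClosure, ← h]; rfl⟩

theorem isClopen_setOf_charMap_eq_one {Γ : AddSubgroup (Fin r → ℤ)} {χ : Fin r → ℤ}
    (hχ : χ ∈ saturation Γ) : IsClopen {t : torusKer Γ | charMap χ t = 1} := by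
  obtain ⟨m, hm, hmχ⟩ := hχ
  lift m to ℕ using hm.le
  have : NeZero m := ⟨by omega⟩
  let g : torusKer Γ → rootsOfUnity m ℂ := fun t =>
    ⟨charMap χ t, by rw [mem_rootsOfUnity, ← zpow_natCast, ← charMap_zsmul]; exact t.2 _ hmχ⟩
  have hg : Continuous g := ((continuous_charMap χ).comp continuous_subtype_val).subtype_mk _
  convert (isClopen_discrete {(1 : rootsOfUnity m ℂ)}).preimage hg using 1
  ext t
  simp [g, Subtype.ext_iff]

theorem isClopen_preimage_torusKer_closure {Γ : AddSubgroup (Fin r → ℤ)} {S : Set (Fin r → ℤ)}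
    (hS : S.Finite) (hSΓ : S ⊆ saturation Γ) :
    IsClopen (torusKer Γ ↓∩ torusKer (AddSubgroup.closure S)) := by
  rw [torusKer_closure]
  convert hS.isClopen_biInter fun χ hχ => isClopen_setOf_charMap_eq_one (hSΓ hχ) using 1
  ext t
  simp

end Saturation

/-- **Proposition 3.1 (connected components).** For a subgroup `Γ ≤ ℤ^r`, the connected
component of the identity in `T_Γ = {t ∈ (ℂˣ)^r : χ(t) = 1 ∀ χ ∈ Γ}` is exactly
`T_{Γ̄}`; in particular `T_{Γ̄}` is connected. -/
theorem stmt2 {r : ℕ} (Γ : AddSubgroup (Fin r → ℤ)) :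
    connectedComponentIn (torusKer Γ) 1 = torusKer (saturation Γ) ∧
    IsConnected (torusKer (saturation Γ)) := by
  obtain ⟨b, s, hbs⟩ := exists_basis_saturation_eq_closure Γ
  have hconn : IsConnected (torusKer (saturation Γ)) :=
    hbs ▸ isConnected_torusKer_closure_image_basis b s
  have hclopen : IsClopen (torusKer Γ ↓∩ torusKer (saturation Γ)) := by
    rw [hbs]
    exact isClopen_preimage_torusKer_closure ((toFinite s).image b)
      (hbs ▸ AddSubgroup.subset_closure)
  have hsub : torusKer (saturation Γ) ⊆ torusKer Γ := torusKer_anti (le_saturation Γ)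
  refine ⟨subset_antisymm ?_ ?_, hconn⟩
  · rw [hclopen.biUnion_connectedComponentIn hsub]
    exact subset_biUnion_of_mem (u := connectedComponentIn (torusKer Γ)) (one_mem_torusKer _)
  · exact hconn.isPreconnected.subset_connectedComponentIn (one_mem_torusKer _) hsub
end

section
/- Let Ψ ⊂ ℂˣ × ℤ^r be a finite set such that 1 − a·e^ψ ≠ 0 in A for every (a,ψ) ∈ Ψ (equivalently, no element of Ψ equals (1,0)). Let Γ ≤ ℤ^r be the subgroup generated by the set Ξ = {ψ : (a,ψ) ∈ Ψ}, and let ℂ[Γ] ⊆ A be the subalgebra spanned by the basis elements e^γ with γ ∈ Γ. Then, in the fraction field K of A, the element ∏_{(a,ψ)∈Ψ} (1 − a·e^ψ)^{-1} lies in the ℂ[Γ]-submodule of K generated by the elements of the form ∏_{i=1}^s (1 − a_i·e^{ψ_i})^{-h_i}, where (a_i,ψ_i) ∈ Ψ for each i, h_i are positive integers, and ψ₁, …, ψ_s ∈ ℤ^r are linearly independent over ℚ. (Proposition 3.2, reduction to linearly independent denominators.) -/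
/-!
Write `fᵢ = 1 - aᵢ e^{ψᵢ}` and `G(h) = ∏ fᵢ^{-hᵢ}` for an exponent vector `h`. We show by
induction on `h`, ordered lexicographically, that `G(h)` lies in the `ℂ[Γ]`-span `M` of the
admissible generators, i.e. that `1` lies in the ideal `M : G(h)` of `ℂ[Γ]`. Since
`fᵢ G(h) = G(h - eᵢ)`, this ideal contains every `fᵢ` with `hᵢ > 0`. If the `ψᵢ` with `hᵢ > 0` are
independent, `G(h)` is itself a generator. Otherwise an integer relation, split into parts with
disjoint supports `∑ mᵢ ψᵢ = ∑ nᵢ ψᵢ`, makes the monomials `X = ∏ (aᵢ e^{ψᵢ})^{mᵢ}` and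
`Y = ∏ (aᵢ e^{ψᵢ})^{nᵢ}` proportional, `X = c Y`, while both are `≡ 1` modulo the `fᵢ`; if `c ≠ 1`
this puts `1` in the ideal. If `c = 1`, let `q` be the largest index in the relation and `N` its
coefficient, so that `(a_q e^{ψ_q})^N ≡ 1` modulo the other `fᵢ`. These lie in the ideal of
`h + e_q`, because `h + e_q - eᵢ < h` for `i < q`; hence `P = ∑_{j<N} (a_q e^{ψ_q})^j`, which
satisfies `P f_q = 1 - (a_q e^{ψ_q})^N`, lies in the ideal of `h`. So does `f_q`, and `P ≡ N`
modulo `f_q`.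
-/

/-- The Laurent polynomial ring `A = ℂ[ℤ^r]`, with basis elements `e^ψ`, `ψ ∈ ℤ^r`. -/
abbrev LaurentA (r : ℕ) : Type := AddMonoidAlgebra ℂ (Fin r → ℤ)

noncomputable instance {r : ℕ} : IsDomain (LaurentA r) := NoZeroDivisors.to_isDomain _

open Finset

namespace Ideal

variable {ι R : Type*} [CommRing R] {I : Ideal R}

theorem one_sub_prod_pow_mem [Fintype ι] {u : ι → R} {m : ι → ℕ}
    (hu : ∀ i, m i ≠ 0 → 1 - u i ∈ I) : 1 - ∏ i, u i ^ m i ∈ I := by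
  rw [← Quotient.eq, map_one, map_prod]
  refine (prod_eq_one fun i _ => ?_).symm
  obtain hi | hi := eq_or_ne (m i) 0
  · rw [hi, pow_zero, map_one]
  · rw [map_pow, ← Quotient.eq.mpr (hu i hi), map_one, one_pow]

theorem one_mem_of_one_sub_mem_of_eq_smul {k : Type*} [Field k] [Algebra k R] {x y : R} {c : k}
    (hx : 1 - x ∈ I) (hy : 1 - y ∈ I) (hxy : x = c • y) (hc : c ≠ 1) : (1 : R) ∈ I := by
  have hc' : (1 - c) • (1 : R) ∈ I := by
    have : (1 - c) • (1 : R) = (1 - x) - c • (1 - y) := by rw [hxy]; module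
    exact this ▸ I.sub_mem hx (I.smul_of_tower_mem c hy)
  simpa [inv_smul_smul₀ (sub_ne_zero.mpr hc.symm)] using I.smul_of_tower_mem (1 - c)⁻¹ hc'

theorem one_sub_pow_mem_of_prod_pow_eq [Fintype ι] {u : ι → R} {m n : ι → ℕ} {q : ι}
    (hmn : ∏ i, u i ^ m i = ∏ i, u i ^ n i) (hq : m q = 0 ∨ n q = 0)
    (hu : ∀ i ≠ q, m i + n i ≠ 0 → 1 - u i ∈ I) : 1 - u q ^ (m q + n q) ∈ I := by
  have mk_prod : ∀ e : ι → ℕ, (∀ i ≠ q, e i ≠ 0 → 1 - u i ∈ I) →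
      Quotient.mk I (∏ i, u i ^ e i) = Quotient.mk I (u q) ^ e q := by
    intro e he
    rw [map_prod, prod_eq_single q (fun i _ hiq => ?_) (by simp), map_pow]
    obtain hi | hi := eq_or_ne (e i) 0
    · rw [hi, pow_zero, map_one]
    · rw [map_pow, ← Quotient.eq.mpr (he i hiq hi), map_one, one_pow]
  have hm := mk_prod m fun i hiq hi => hu i hiq (by omega)
  have hn := mk_prod n fun i hiq hi => hu i hiq (by omega)
  rw [← Quotient.eq, map_one, map_pow, pow_add]
  rcases hq with hq | hq
  · rw [hq, pow_zero, one_mul, ← hn, ← hmn, hm, hq, pow_zero]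
  · rw [hq, pow_zero, mul_one, ← hm, hmn, hn, hq, pow_zero]

theorem one_mem_of_one_sub_mem_of_geom_sum_mem {k : Type*} [Field k] [CharZero k] [Algebra k R]
    {x : R} {N : ℕ} (hN : N ≠ 0) (hx : 1 - x ∈ I) (hsum : ∑ j ∈ range N, x ^ j ∈ I) :
    (1 : R) ∈ I := by
  have hdiff : ∑ j ∈ range N, x ^ j - N ∈ I :=
    Quotient.eq.mp (by simp [map_sum, ← Quotient.eq.mpr hx])
  have hN' : (N : R) ∈ I := by simpa using I.sub_mem hsum hdiff
  have hunit : IsUnit (N : R) := by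
    simpa using (IsUnit.mk0 (N : k) (Nat.cast_ne_zero.mpr hN)).map (algebraMap k R)
  rw [I.eq_top_of_isUnit_mem hN' hunit]
  exact Submodule.mem_top

end Ideal

theorem exists_nat_relation_of_not_linearIndepOn {ι V : Type*} [Fintype ι] [AddCommGroup V]
    {ψ : ι → V} {s : Set ι} (hs : ¬LinearIndepOn ℤ ψ s) :
    ∃ m n : ι → ℕ, ∑ i, m i • ψ i = ∑ i, n i • ψ i ∧ (∀ i, m i = 0 ∨ n i = 0) ∧
      Function.support (m + n) ⊆ s ∧ m + n ≠ 0 := by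
  obtain ⟨f, hfs, hf, hf0⟩ := linearDepOn_iff'.mp hs
  refine ⟨fun i => (f i).toNat, fun i => (-f i).toNat, ?_, fun i => by dsimp only; omega,
    fun i hi => hfs (Finsupp.mem_support_iff.mpr ?_), ?_⟩
  · rw [← sub_eq_zero, ← sum_sub_distrib, ← hf, Finsupp.linearCombination_apply,
      Finsupp.sum_fintype _ _ (by simp)]
    refine sum_congr rfl fun i _ => ?_
    rw [← natCast_zsmul, ← natCast_zsmul, ← sub_smul]
    congr 1
    dsimp only
    omega
  · simp only [Function.mem_support, Pi.add_apply] at hi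
    omega
  · contrapose! hf0
    ext i
    have := congrFun hf0 i
    simp only [Pi.add_apply, Pi.zero_apply] at this
    simp only [Finsupp.coe_zero, Pi.zero_apply]
    omega

namespace Pi

variable {ι : Type*} {h : ι → ℕ} {i q : ι}

theorem sub_single_add_single [DecidableEq ι] (hi : h i ≠ 0) :
    h - Pi.single i 1 + Pi.single i 1 = h := by
  ext j
  obtain rfl | hj := eq_or_ne j i
  · simp; omega
  · simp [hj]

variable [LinearOrder ι]

theorem toLex_sub_single_lt (hi : h i ≠ 0) : toLex (h - Pi.single i 1) < toLex h :=
  ⟨i, fun j hj => by simp [hj.ne], by simp; omega⟩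

theorem toLex_add_single_sub_single_lt (hi : h i ≠ 0) (hiq : i < q) :
    toLex (h + Pi.single q 1 - Pi.single i 1) < toLex h :=
  ⟨i, fun j hj => by simp [hj.ne, (hj.trans hiq).ne], by simp [hiq.ne]; omega⟩

end Pi

section InvProdOneSub

variable {R K ι : Type*} [CommRing R] [Field K] [Algebra R K] [Fintype ι]

variable (K) in
noncomputable def invProdOneSub (u : ι → R) (h : ι → ℕ) : K :=
  (∏ i, algebraMap R K (1 - u i) ^ h i)⁻¹

variable [DecidableEq ι] {u : ι → R} {i : ι} {M : Submodule R K} {h : ι → ℕ}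

theorem smul_invProdOneSub_add_single (hu : algebraMap R K (1 - u i) ≠ 0) (h : ι → ℕ) :
    (1 - u i) • invProdOneSub K u (h + Pi.single i 1) = invProdOneSub K u h := by
  have hprod : ∏ j, algebraMap R K (1 - u j) ^ (h + Pi.single i 1 : ι → ℕ) j =
      (∏ j, algebraMap R K (1 - u j) ^ h j) * algebraMap R K (1 - u i) := by
    simp only [Pi.add_apply, pow_add, prod_mul_distrib]
    congr 1
    rw [prod_eq_single i (fun j _ hj => by simp [hj]) (by simp), Pi.single_eq_same, pow_one]
  rw [invProdOneSub, invProdOneSub, hprod, Algebra.smul_def, mul_inv, mul_left_comm,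
    mul_inv_cancel₀ hu, mul_one]

theorem one_sub_mem_colon_invProdOneSub_add_single (hu : algebraMap R K (1 - u i) ≠ 0)
    (hM : invProdOneSub K u h ∈ M) :
    1 - u i ∈ M.colon {invProdOneSub K u (h + Pi.single i 1)} := by
  rwa [Submodule.mem_colon_singleton, smul_invProdOneSub_add_single hu]

theorem mul_mem_colon_invProdOneSub_add_single_iff (hu : algebraMap R K (1 - u i) ≠ 0) {a : R} :
    (1 - u i) * a ∈ M.colon {invProdOneSub K u (h + Pi.single i 1)} ↔
      a ∈ M.colon {invProdOneSub K u h} := by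
  rw [Submodule.mem_colon_singleton, Submodule.mem_colon_singleton, mul_comm, mul_smul,
    smul_invProdOneSub_add_single hu]

end InvProdOneSub

theorem invProdOneSub_mem_of_forall_linearIndepOn {R K ι k V : Type*} [CommRing R] [Field K]
    [Algebra R K] [Fintype ι] [LinearOrder ι] [Field k] [CharZero k] [Algebra k R]
    [AddCommGroup V] {u : ι → R} {ψ : ι → V} (hu : ∀ i, algebraMap R K (1 - u i) ≠ 0)
    (hψ : ∀ m n : ι → ℕ, ∑ i, m i • ψ i = ∑ i, n i • ψ i →
      ∃ c : k, ∏ i, u i ^ m i = c • ∏ i, u i ^ n i)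
    {M : Submodule R K}
    (hM : ∀ h, LinearIndepOn ℤ ψ (Function.support h) → invProdOneSub K u h ∈ M)
    (h : ι → ℕ) : invProdOneSub K u h ∈ M := by
  induction hlex : toLex h using WellFoundedLT.induction generalizing h with
  | _ _ IH =>
  subst hlex
  by_cases hind : LinearIndepOn ℤ ψ (Function.support h)
  · exact hM h hind
  have one_sub_mem : ∀ g : ι → ℕ, ∀ i, g i ≠ 0 → toLex (g - Pi.single i 1) < toLex h →
      1 - u i ∈ M.colon {invProdOneSub K u g} := fun g i hi hlt => by
    rw [← Pi.sub_single_add_single hi]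
    exact one_sub_mem_colon_invProdOneSub_add_single (hu i) (IH _ hlt _ rfl)
  obtain ⟨m, n, hsum, hdisj, hsupp, hne⟩ := exists_nat_relation_of_not_linearIndepOn hind
  have hsupp' : ∀ i, m i + n i ≠ 0 → h i ≠ 0 := fun i hi => hsupp hi
  suffices (1 : R) ∈ M.colon {invProdOneSub K u h} by
    simpa using Submodule.mem_colon_singleton.mp this
  obtain ⟨c, hc⟩ := hψ m n hsum
  obtain rfl | hc1 := eq_or_ne c 1
  · rw [one_smul] at hc
    set T := univ.filter fun i => m i + n i ≠ 0
    have hT : T.Nonempty := by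
      obtain ⟨i, hi⟩ := Function.ne_iff.mp hne
      exact ⟨i, mem_filter.mpr ⟨mem_univ i, hi⟩⟩
    set q := T.max' hT
    have hq : m q + n q ≠ 0 := (mem_filter.mp (T.max'_mem hT)).2
    refine Ideal.one_mem_of_one_sub_mem_of_geom_sum_mem (k := k) hq
      (one_sub_mem h q (hsupp' q hq) (Pi.toLex_sub_single_lt (hsupp' q hq))) ?_
    rw [← mul_mem_colon_invProdOneSub_add_single_iff (hu q), mul_neg_geom_sum]
    refine Ideal.one_sub_pow_mem_of_prod_pow_eq hc (hdisj q) fun i hiq hi => ?_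
    have hlt : i < q := lt_of_le_of_ne (T.le_max' i (mem_filter.mpr ⟨mem_univ i, hi⟩)) hiq
    exact one_sub_mem _ i (by simp [hiq, hsupp' i hi])
      (Pi.toLex_add_single_sub_single_lt (hsupp' i hi) hlt)
  · have hmem : ∀ i, m i + n i ≠ 0 → 1 - u i ∈ M.colon {invProdOneSub K u h} :=
      fun i hi => one_sub_mem h i (hsupp' i hi) (Pi.toLex_sub_single_lt (hsupp' i hi))
    exact Ideal.one_mem_of_one_sub_mem_of_eq_smul
      (Ideal.one_sub_prod_pow_mem fun i hi => hmem i (by omega))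
      (Ideal.one_sub_prod_pow_mem fun i hi => hmem i (by omega)) hc hc1

namespace AddMonoidAlgebra

variable (k : Type*) {G : Type*} [CommSemiring k]

noncomputable def supportedSubalgebra [AddMonoid G] (S : AddSubmonoid G) : Subalgebra k k[G] :=
  (Submodule.span k {x | ∃ γ ∈ S, x = single γ 1}).toSubalgebra
    (Submodule.subset_span ⟨0, S.zero_mem, one_def⟩)
    fun x y hx hy => by
      have hxy := Submodule.mul_mem_mul hx hy
      rw [Submodule.span_mul_span] at hxy
      refine Submodule.span_mono ?_ hxy
      rintro _ ⟨_, ⟨γ, hγ, rfl⟩, _, ⟨γ', hγ', rfl⟩, rfl⟩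
      exact ⟨γ + γ', S.add_mem hγ hγ', by simp [single_mul_single]⟩

variable {k}

theorem single_mem_supportedSubalgebra [AddMonoid G] {S : AddSubmonoid G} {γ : G} (hγ : γ ∈ S)
    (c : k) : single γ c ∈ supportedSubalgebra k S := by
  have : single γ c = c • single γ 1 := by rw [smul_single, smul_eq_mul, mul_one]
  exact this ▸ Submodule.smul_mem _ c (Submodule.subset_span ⟨γ, hγ, rfl⟩)

theorem prod_single_pow {ι : Type*} [AddCommMonoid G] (s : Finset ι) (ψ : ι → G) (a : ι → k)
    (m : ι → ℕ) :
    ∏ i ∈ s, single (ψ i) (a i) ^ m i = single (∑ i ∈ s, m i • ψ i) (∏ i ∈ s, a i ^ m i) := by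
  simp_rw [single_pow, prod_single]

theorem exists_prod_single_pow_eq_smul {k ι : Type*} [Field k] [AddCommMonoid G] [Fintype ι]
    {ψ : ι → G} {a : ι → k} (ha : ∀ i, a i ≠ 0) {m n : ι → ℕ}
    (h : ∑ i, m i • ψ i = ∑ i, n i • ψ i) :
    ∃ c : k, ∏ i, single (ψ i) (a i) ^ m i = c • ∏ i, single (ψ i) (a i) ^ n i :=
  ⟨(∏ i, a i ^ m i) / ∏ i, a i ^ n i, by
    rw [prod_single_pow, prod_single_pow, h, smul_single, smul_eq_mul,
      div_mul_cancel₀ _ (prod_ne_zero_iff.mpr fun i _ => pow_ne_zero _ (ha i))]⟩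

end AddMonoidAlgebra

theorem LinearIndependent.intCast_rat {ι κ : Type*} {v : ι → κ → ℤ}
    (hv : LinearIndependent ℤ v) : LinearIndependent ℚ fun i l => (v i l : ℚ) := by
  let cast : (κ → ℤ) →ₗ[ℤ] (κ → ℚ) := ((Int.castAddHom ℚ).compLeft κ).toIntLinearMap
  have hcast : LinearMap.ker cast = ⊥ := LinearMap.ker_eq_bot.mpr fun x y hxy =>
    funext fun l => Int.cast_injective (congrFun hxy l)
  exact (LinearIndependent.iff_fractionRing ℤ ℚ).mp (hv.map' cast hcast)

open AddMonoidAlgebra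

def linIndepDenominators {r : ℕ} (Ψ : Finset (ℂˣ × (Fin r → ℤ))) :
    Set (FractionRing (LaurentA r)) :=
  {g | ∃ (s : ℕ) (p : Fin s → ℂˣ × (Fin r → ℤ)) (h : Fin s → ℕ),
    (∀ i, p i ∈ Ψ) ∧ (∀ i, 0 < h i) ∧
    LinearIndependent ℚ (fun (i : Fin s) (l : Fin r) => (((p i).2 l : ℚ))) ∧
    g = (∏ i, algebraMap (LaurentA r) (FractionRing (LaurentA r))
      ((1 : LaurentA r) - single (p i).2 (((p i).1 : ℂ))) ^ (h i))⁻¹}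

theorem inv_prod_mem_linIndepDenominators {r : ℕ} {ι : Type*} [Fintype ι]
    {Ψ : Finset (ℂˣ × (Fin r → ℤ))} {p : ι → ℂˣ × (Fin r → ℤ)} (hp : ∀ i, p i ∈ Ψ)
    {h : ι → ℕ} (hind : LinearIndepOn ℤ (fun i => (p i).2) (Function.support h)) :
    (∏ i, algebraMap (LaurentA r) (FractionRing (LaurentA r))
      (1 - single (p i).2 ((p i).1 : ℂ)) ^ h i)⁻¹ ∈ linIndepDenominators Ψ := by
  classical
  let S := univ.filter fun i => h i ≠ 0
  let e := S.equivFin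
  have hS : (S : Set ι) = Function.support h := by ext; simp [S]
  refine ⟨S.card, fun j => p (e.symm j), fun j => h (e.symm j), fun j => hp _,
    fun j => Nat.pos_of_ne_zero (mem_filter.mp (e.symm j).2).2, ?_, ?_⟩
  · rw [← hS] at hind
    exact (hind.comp e.symm e.symm.injective).intCast_rat
  · rw [← prod_filter_of_ne (p := fun i => h i ≠ 0) fun i _ hi => by
        contrapose! hi; simp [hi], ← prod_coe_sort, ← e.symm.prod_comp]

theorem inv_prod_mem_span_linIndepDenominators {r : ℕ} {ι : Type*} [Fintype ι] [LinearOrder ι]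
    {Ψ : Finset (ℂˣ × (Fin r → ℤ))} {Γ : AddSubgroup (Fin r → ℤ)} {p : ι → ℂˣ × (Fin r → ℤ)}
    (hpΨ : ∀ i, p i ∈ Ψ) (hpΓ : ∀ i, (p i).2 ∈ Γ)
    (hp : ∀ i, (1 : LaurentA r) - single (p i).2 ((p i).1 : ℂ) ≠ 0) (h : ι → ℕ) :
    (∏ i, algebraMap (LaurentA r) (FractionRing (LaurentA r))
      (1 - single (p i).2 ((p i).1 : ℂ)) ^ h i)⁻¹ ∈
      Submodule.span (supportedSubalgebra ℂ Γ.toAddSubmonoid) (linIndepDenominators Ψ) := by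
  let K := FractionRing (LaurentA r)
  let C := supportedSubalgebra ℂ Γ.toAddSubmonoid
  let u : ι → C := fun i => ⟨_, single_mem_supportedSubalgebra (hpΓ i) ((p i).1 : ℂ)⟩
  have hinv : ∀ h, invProdOneSub K u h = (∏ i, algebraMap (LaurentA r) K
      (1 - single (p i).2 ((p i).1 : ℂ)) ^ h i)⁻¹ := fun h => by
    simp [invProdOneSub, u, IsScalarTower.algebraMap_apply C (LaurentA r) K]
  rw [← hinv]
  refine invProdOneSub_mem_of_forall_linearIndepOn (k := ℂ) (ψ := fun i => (p i).2)
    (fun i => ?_) (fun m n hmn => ?_) (fun h hind => ?_) h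
  · rw [IsScalarTower.algebraMap_apply C (LaurentA r) K]
    exact (map_ne_zero_iff _ (IsFractionRing.injective _ K)).mpr (hp i)
  · obtain ⟨c, hc⟩ := exists_prod_single_pow_eq_smul (fun i => (p i).1.ne_zero) hmn
    exact ⟨c, Subtype.ext (by push_cast; exact hc)⟩
  · exact Submodule.subset_span (hinv h ▸ inv_prod_mem_linIndepDenominators hpΨ hind)

/-- **Proposition 3.2 (reduction to linearly independent denominators).**
Let `Ψ ⊂ ℂˣ × ℤ^r` be finite with `1 − a·e^ψ ≠ 0` for all `(a,ψ) ∈ Ψ`, let `Γ` be the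
subgroup generated by the projection of `Ψ` to `ℤ^r`, and let `ℂ[Γ] ⊆ A` be the span of the
`e^γ`, `γ ∈ Γ`. Then in the fraction field of `A` the element `∏_{(a,ψ)∈Ψ} (1 − a e^ψ)⁻¹` is
a `ℂ[Γ]`-linear combination of elements `∏ᵢ (1 − aᵢ e^{ψᵢ})^{-hᵢ}` with `(aᵢ,ψᵢ) ∈ Ψ`,
`hᵢ > 0`, and `ψ₁,…,ψ_s` linearly independent over `ℚ`. -/
theorem stmt3 {r : ℕ} (Ψ : Finset (ℂˣ × (Fin r → ℤ)))
    (hΨ : ∀ p ∈ Ψ, (1 : LaurentA r) - AddMonoidAlgebra.single p.2 ((p.1 : ℂ)) ≠ 0)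
    (Γ : AddSubgroup (Fin r → ℤ))
    (hΓ : Γ = AddSubgroup.closure {ψ | ∃ a : ℂˣ, (a, ψ) ∈ Ψ}) :
    ∃ (n : ℕ) (c : Fin n → LaurentA r) (g : Fin n → FractionRing (LaurentA r)),
      (∀ j, c j ∈ Submodule.span ℂ
        {x : LaurentA r | ∃ γ ∈ Γ, x = AddMonoidAlgebra.single γ (1 : ℂ)}) ∧
      (∀ j, ∃ (s : ℕ) (p : Fin s → ℂˣ × (Fin r → ℤ)) (h : Fin s → ℕ),
          (∀ i, p i ∈ Ψ) ∧ (∀ i, 0 < h i) ∧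
          LinearIndependent ℚ (fun (i : Fin s) (l : Fin r) => (((p i).2 l : ℚ))) ∧
          g j = (∏ i, (algebraMap (LaurentA r) (FractionRing (LaurentA r))
              ((1 : LaurentA r) - AddMonoidAlgebra.single (p i).2 (((p i).1 : ℂ)))) ^ (h i))⁻¹) ∧
      (algebraMap (LaurentA r) (FractionRing (LaurentA r))
          (∏ p ∈ Ψ, ((1 : LaurentA r) - AddMonoidAlgebra.single p.2 ((p.1 : ℂ)))))⁻¹ =
        ∑ j, algebraMap (LaurentA r) (FractionRing (LaurentA r)) (c j) * g j := by
  let p : Fin Ψ.card → ℂˣ × (Fin r → ℤ) := fun i => Ψ.equivFin.symm i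
  have hpΨ : ∀ i, p i ∈ Ψ := fun i => (Ψ.equivFin.symm i).2
  have hmem := inv_prod_mem_span_linIndepDenominators (Γ := Γ) hpΨ
    (fun i => hΓ ▸ AddSubgroup.subset_closure ⟨_, hpΨ i⟩) (fun i => hΨ _ (hpΨ i)) fun _ => 1
  have hprod : ∏ i, algebraMap (LaurentA r) (FractionRing (LaurentA r))
      (1 - single (p i).2 ((p i).1 : ℂ)) ^ 1 = algebraMap (LaurentA r)
      (FractionRing (LaurentA r)) (∏ q ∈ Ψ, (1 - single q.2 (q.1 : ℂ))) := by
    rw [map_prod, ← prod_coe_sort Ψ, ← Ψ.equivFin.symm.prod_comp]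
    simp [p]
  rw [hprod] at hmem
  obtain ⟨n, c, g, hsum⟩ := Submodule.mem_span_set'.mp hmem
  refine ⟨n, fun j => c j, fun j => g j, fun j => (c j).2, fun j => (g j).2, ?_⟩
  rw [← hsum]
  simp only [Algebra.smul_def, IsScalarTower.algebraMap_apply (supportedSubalgebra ℂ
    Γ.toAddSubmonoid) (LaurentA r) (FractionRing (LaurentA r))]
  rfl
end

section
/- Let Δ ⊂ ℂˣ × ℤ^r be a finite set with (1,0) ∉ Δ, and set d = ∏_{(a,χ)∈Δ} (1 − a·e^χ) ∈ A, a nonzero element. For each subset S ⊆ Δ whose projection to ℤ^r consists of linearly independent vectors, set d_S = ∏_{(a,χ)∈S} (1 − a·e^χ) (with d_∅ = 1). Then for every f ∈ A and every n ∈ ℕ, the element f/d^n of the fraction field K can be written as a finite sum Σ_j g_j / d_{S_j}^{n_j}, where each S_j ⊆ Δ has linearly independent projection to ℤ^r, g_j ∈ A, and n_j ∈ ℕ. (Corollary to Proposition 3.2: R = R_r, i.e. the localization A[d^{-1}] equals Σ_S A[d_S^{-1}].) -/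
open Finset AddMonoidAlgebra

section PartialFractions

theorem Submodule.algebraMap_mul_mem {R A : Type*} [CommSemiring R] [Semiring A] [Algebra R A]
    (M : Submodule R A) (r : R) {x : A} (hx : x ∈ M) : algebraMap R A r * x ∈ M :=
  Algebra.smul_def r x ▸ M.smul_mem r hx

variable {R K ι : Type*} [CommRing R] [Field K] [Algebra R K]

local notation "φ" => algebraMap R K

theorem prod_inv_pow_eq_mul_inv_pow {u : ι → R} {T : Finset ι} (hu : ∀ j ∈ T, φ (u j) ≠ 0)
    {n : ι → ℕ} {e : ℕ} (he : ∀ j ∈ T, n j ≤ e) :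
    ∏ j ∈ T, (φ (u j))⁻¹ ^ n j = φ (∏ j ∈ T, u j ^ (e - n j)) * (φ (∏ j ∈ T, u j) ^ e)⁻¹ := by
  rw [map_prod, map_prod, ← prod_pow, ← prod_inv_distrib, ← prod_mul_distrib]
  refine prod_congr rfl fun j hj => ?_
  have := pow_ne_zero e (hu j hj)
  rw [map_pow, pow_sub₀ _ (hu j hj) (he j hj), inv_pow]
  field_simp

variable [DecidableEq ι]

/-- Multiplying `1 / ∏_{j ∈ T} u_j^{n_j}` by `1 = a + b * u i` gives one fraction with a factor
`u i` fewer and fractions trading one more factor `u i` for one factor `u j` fewer, `j ≠ i`. -/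
def PartialFractionPivot (u : ι → R) (T : Finset ι) (i : ι) : Prop :=
  ∃ a b : R, a + b * u i = 1 ∧ u i * a ∈ Ideal.span (u '' ↑(T.erase i))

theorem partialFractionPivot_of_one_mem_span {u : ι → R} {T : Finset ι}
    (h : 1 ∈ Ideal.span (u '' ↑T)) (i : ι) : PartialFractionPivot u T i := by
  have hle : Ideal.span (u '' ↑T) ≤ Ideal.span {u i} ⊔ Ideal.span (u '' ↑(T.erase i)) := by
    rw [← Ideal.span_insert, ← Set.image_insert_eq, ← coe_insert]
    exact Ideal.span_mono (Set.image_mono (by simp))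
  obtain ⟨y, hy, a, ha, hya⟩ := Submodule.mem_sup.mp (hle h)
  obtain ⟨b, rfl⟩ := Ideal.mem_span_singleton'.mp hy
  exact ⟨a, b, by rw [← hya, add_comm], Ideal.mul_mem_left _ _ ha⟩

theorem partialFractionPivot_of_one_sub_pow_mem {u : ι → R} {T : Finset ι} {i : ι} {v : R}
    (hu : u i = 1 - v) {m : ℕ} (hm : IsUnit (m : R))
    (h : 1 - v ^ m ∈ Ideal.span (u '' ↑(T.erase i))) : PartialFractionPivot u T i := by
  -- `a = m⁻¹ ∑_{j<m} v^j`: then `(1 - v) a = m⁻¹ (1 - v^m)`, and `a ≡ 1` modulo `1 - v`.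
  obtain ⟨w, hw⟩ : 1 - v ∣ (m : R) - ∑ j ∈ range m, v ^ j := by
    have : (m : R) - ∑ j ∈ range m, v ^ j = ∑ j ∈ range m, (1 ^ j - v ^ j) := by simp
    exact this ▸ dvd_sum fun j _ => sub_dvd_pow_sub_pow 1 v j
  refine ⟨hm.unit⁻¹ * ∑ j ∈ range m, v ^ j, hm.unit⁻¹ * w, ?_, ?_⟩
  · rw [hu, mul_assoc, mul_comm w, ← hw, ← mul_add, add_sub_cancel, IsUnit.val_inv_mul]
  · rw [hu, mul_left_comm, mul_neg_geom_sum]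
    exact Ideal.mul_mem_left _ _ h

theorem mul_prod_inv_pow_add_single {u : ι → R} {T : Finset ι} {i : ι} (hi : i ∈ T)
    (hui : φ (u i) ≠ 0) (n : ι → ℕ) :
    φ (u i) * ∏ j ∈ T, (φ (u j))⁻¹ ^ (n + Pi.single i 1 : ι → ℕ) j =
      ∏ j ∈ T, (φ (u j))⁻¹ ^ n j := by
  have hsingle : ∏ j ∈ T, (φ (u j))⁻¹ ^ (Pi.single i 1 : ι → ℕ) j = (φ (u i))⁻¹ := by
    rw [prod_eq_single i (fun j _ hj => by rw [Pi.single_eq_of_ne hj, pow_zero]) (absurd hi),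
      Pi.single_eq_same, pow_one]
  simp_rw [Pi.add_apply, pow_add]
  rw [prod_mul_distrib, hsingle, mul_left_comm, mul_inv_cancel₀ hui, mul_one]

theorem tsub_single_add_single {n : ι → ℕ} {i : ι} (hi : n i ≠ 0) :
    n - Pi.single i 1 + Pi.single i 1 = n := by
  ext j
  rcases eq_or_ne j i with rfl | hj
  · simp only [Pi.add_apply, Pi.sub_apply, Pi.single_eq_same]
    omega
  · simp [hj]

theorem mul_prod_inv_pow_eq_tsub_single {u : ι → R} {T : Finset ι} {i : ι} (hi : i ∈ T)
    (hui : φ (u i) ≠ 0) {n : ι → ℕ} (hni : n i ≠ 0) :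
    φ (u i) * ∏ j ∈ T, (φ (u j))⁻¹ ^ n j =
      ∏ j ∈ T, (φ (u j))⁻¹ ^ (n - Pi.single i 1 : ι → ℕ) j := by
  conv_lhs => rw [← tsub_single_add_single hni]
  exact mul_prod_inv_pow_add_single hi hui _

theorem prod_inv_pow_mem_of_pivot {M : Submodule R K} {u : ι → R} {T : Finset ι}
    (hu : ∀ j ∈ T, φ (u j) ≠ 0) {i : ι} (hi : i ∈ T) (hpivot : PartialFractionPivot u T i)
    (herase : ∀ j ∈ T, ∀ n : ι → ℕ, ∏ l ∈ T.erase j, (φ (u l))⁻¹ ^ n l ∈ M) (n : ι → ℕ) :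
    ∏ j ∈ T, (φ (u j))⁻¹ ^ n j ∈ M := by
  obtain ⟨a, b, hab, hua⟩ := hpivot
  obtain ⟨c, hc⟩ := (Submodule.mem_span_image_finset_iff_exists_fun' R).mp hua
  set x : (ι → ℕ) → K := fun m => ∏ j ∈ T, (φ (u j))⁻¹ ^ m j
  -- Both terms produced by splitting `1 = a + b * u i` lower this weight by one.
  let w : (ι → ℕ) → ℕ := fun m => ∑ j ∈ T, m j + ∑ j ∈ T.erase i, m j
  have hw_add (m m' : ι → ℕ) : w (m + m') = w m + w m' := by
    simp only [w, Pi.add_apply, sum_add_distrib]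
    ring
  have hw_single (j : ι) (hj : j ∈ T) : w (Pi.single j 1) = if j = i then 1 else 2 := by
    rcases eq_or_ne j i with rfl | hji
    · simp [w, sum_pi_single', hj]
    · simp [w, sum_pi_single', hj, hji]
  induction hN : w n using Nat.strong_induction_on generalizing n with
  | _ N ih =>
  by_cases hzero : ∃ j ∈ T, n j = 0
  · obtain ⟨j, hj, hnj⟩ := hzero
    rw [← prod_erase _ (by rw [hnj, pow_zero])]
    exact herase j hj n
  push Not at hzero
  have hsplit : x n = φ a * x n + φ b * (φ (u i) * x n) := by
    rw [← mul_assoc, ← map_mul, ← add_mul, ← map_add, hab, map_one, one_mul]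
  have hax : φ a * x n = ∑ j ∈ T.erase i, φ (c j) * x (n + Pi.single i 1 - Pi.single j 1) := by
    have hup : x n = φ (u i) * x (n + Pi.single i 1) :=
      (mul_prod_inv_pow_add_single hi (hu i hi) n).symm
    rw [hup, ← mul_assoc, ← map_mul, mul_comm a, ← hc, map_sum, sum_mul]
    refine sum_congr rfl fun j hj => ?_
    rw [smul_eq_mul, map_mul, mul_assoc, mul_prod_inv_pow_eq_tsub_single (mem_of_mem_erase hj)
      (hu j (mem_of_mem_erase hj)) (by simp [hzero j (mem_of_mem_erase hj)])]
  show x n ∈ M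
  rw [hsplit, hax, mul_prod_inv_pow_eq_tsub_single hi (hu i hi) (hzero i hi)]
  refine M.add_mem (M.sum_mem fun j hj => M.algebraMap_mul_mem _ (ih _ ?_ _ rfl))
    (M.algebraMap_mul_mem _ (ih _ ?_ _ rfl))
  · have h := hw_add (n + Pi.single i 1 - Pi.single j 1) (Pi.single j 1)
    rw [tsub_single_add_single (by simp [hzero j (mem_of_mem_erase hj)]), hw_add,
      hw_single i hi, hw_single j (mem_of_mem_erase hj), if_pos rfl,
      if_neg (ne_of_mem_erase hj)] at h
    omega
  · have h := hw_add (n - Pi.single i 1) (Pi.single i 1)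
    rw [tsub_single_add_single (hzero i hi), hw_single i hi, if_pos rfl] at h
    omega

theorem prod_inv_pow_mem_of_forall_subset {M : Submodule R K} {u : ι → R} {s : Finset ι}
    (hu : ∀ j ∈ s, φ (u j) ≠ 0)
    (hs : ∀ T ⊆ s, (∀ e : ℕ, (φ (∏ j ∈ T, u j) ^ e)⁻¹ ∈ M) ∨ ∃ i ∈ T, PartialFractionPivot u T i)
    {T : Finset ι} (hT : T ⊆ s) (n : ι → ℕ) : ∏ j ∈ T, (φ (u j))⁻¹ ^ n j ∈ M := by
  induction T using Finset.strongInduction generalizing n with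
  | H T ih =>
  have huT : ∀ j ∈ T, φ (u j) ≠ 0 := fun j hj => hu j (hT hj)
  rcases hs T hT with hgood | ⟨i, hi, hpivot⟩
  · rw [prod_inv_pow_eq_mul_inv_pow huT fun j hj => single_le_sum (fun _ _ => Nat.zero_le _) hj]
    exact M.algebraMap_mul_mem _ (hgood _)
  · exact prod_inv_pow_mem_of_pivot huT hi hpivot
      (fun j hj m => ih _ (erase_ssubset hj) ((erase_subset j T).trans hT) m) n

end PartialFractions

theorem units_map_quotient_mk_eq_one_iff {R : Type*} [CommRing R] {J : Ideal R} {v : Rˣ} :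
    Units.map (Ideal.Quotient.mk J).toMonoidHom v = 1 ↔ 1 - (v : R) ∈ J := by
  rw [Units.ext_iff, Units.coe_map, Units.val_one, ← map_one (Ideal.Quotient.mk J)]
  exact Ideal.Quotient.eq.trans (by rw [← neg_sub, neg_mem_iff])

section Monomials

variable {k G : Type*} [Field k] [AddCommGroup G]

noncomputable def monomialUnit : kˣ × Multiplicative G →* (AddMonoidAlgebra k G)ˣ :=
  (singleHom.comp ((Units.coeHom k).prodMap (MonoidHom.id _))).toHomUnits

theorem val_monomialUnit (a : kˣ) (χ : G) :
    (monomialUnit (a, Multiplicative.ofAdd χ) : AddMonoidAlgebra k G) = single χ (a : k) := rfl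

theorem prod_monomialUnit_zpow_of_sum_eq_zero {T : Type*} [Fintype T] (p : T → kˣ × G) (g : T → ℤ)
    (hrel : ∑ t, g t • (p t).2 = 0) :
    ∏ t, monomialUnit ((p t).1, Multiplicative.ofAdd (p t).2) ^ g t
      = monomialUnit (∏ t, (p t).1 ^ g t, 1) := by
  simp_rw [← map_zpow, ← map_prod]
  congr 1
  ext1
  · simp [Prod.fst_prod]
  · simp [Prod.snd_prod, ← ofAdd_zsmul, ← ofAdd_sum, hrel]

theorem val_monomialUnit_one_right (c : kˣ) :
    (monomialUnit (c, (1 : Multiplicative G)) : AddMonoidAlgebra k G) =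
      algebraMap k (AddMonoidAlgebra k G) c := by
  rw [AddMonoidAlgebra.coe_algebraMap]; rfl

theorem one_sub_single_ne_zero {a : kˣ} {χ : G} (h : (a, χ) ≠ (1, 0)) :
    1 - single χ (a : k) ≠ 0 := by
  rw [sub_ne_zero, ne_comm, AddMonoidAlgebra.one_def, Ne, single_inj]
  rintro (⟨rfl, ha⟩ | ⟨ha, -⟩)
  · exact h (by rw [Units.val_eq_one.mp ha])
  · exact a.ne_zero ha

end Monomials

theorem partialFractionPivot_of_sum_zsmul_eq_zero {k G : Type*} [Field k] [CharZero k]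
    [AddCommGroup G] [DecidableEq (kˣ × G)] {T : Finset (kˣ × G)} (g : T → ℤ)
    (hrel : ∑ t, g t • t.1.2 = 0) {t₀ : T} (ht₀ : g t₀ ≠ 0) :
    PartialFractionPivot (fun p : kˣ × G => 1 - single p.2 (p.1 : k)) T t₀ := by
  set u := fun p : kˣ × G => 1 - single p.2 (p.1 : k)
  set v : T → (AddMonoidAlgebra k G)ˣ := fun t => monomialUnit (t.1.1, Multiplicative.ofAdd t.1.2)
  have hprod := prod_monomialUnit_zpow_of_sum_eq_zero (fun t : T => t.1) g hrel
  set c := ∏ t, t.1.1 ^ g t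
  have hv (S : Finset (kˣ × G)) (t : T) (ht : t.1 ∈ S) :
      Units.map (Ideal.Quotient.mk (Ideal.span (u '' ↑S))).toMonoidHom (v t) = 1 := by
    rw [units_map_quotient_mk_eq_one_iff, val_monomialUnit]
    exact Ideal.subset_span (Set.mem_image_of_mem u ht)
  by_cases hc : c = 1
  · set π := (Units.map (Ideal.Quotient.mk (Ideal.span (u '' ↑(T.erase t₀)))).toMonoidHom)
    have hpow : π (v t₀) ^ g t₀ = 1 := by
      have := congrArg π hprod
      rw [map_prod, hc, Prod.mk_one_one, map_one, map_one] at this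
      simp_rw [map_zpow] at this
      rwa [prod_eq_single t₀ (fun t _ ht => by
        rw [hv _ t (mem_erase.mpr ⟨Subtype.coe_injective.ne ht, t.2⟩), one_zpow]) (by simp)] at this
    rw [← pow_natAbs_eq_one, ← map_pow, units_map_quotient_mk_eq_one_iff,
      Units.val_pow_eq_pow_val] at hpow
    refine partialFractionPivot_of_one_sub_pow_mem rfl ?_ hpow
    rw [← map_natCast (algebraMap k (AddMonoidAlgebra k G))]
    exact (Nat.cast_ne_zero.mpr (Int.natAbs_ne_zero.mpr ht₀)).isUnit.map _
  · have hone : Units.map (Ideal.Quotient.mk (Ideal.span (u '' ↑T))).toMonoidHom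
        (monomialUnit (c, 1)) = 1 := by
      rw [← hprod, map_prod]
      exact prod_eq_one fun t _ => by rw [map_zpow, hv T t t.2, one_zpow]
    rw [units_map_quotient_mk_eq_one_iff, val_monomialUnit_one_right, ← map_one (algebraMap k _),
      ← map_sub] at hone
    have hunit : IsUnit (algebraMap k (AddMonoidAlgebra k G) (1 - c)) :=
      (sub_ne_zero.mpr (Ne.symm (Units.val_eq_one.not.mpr hc))).isUnit.map _
    have htop : Ideal.span (u '' ↑T) = ⊤ := Ideal.eq_top_of_isUnit_mem _ hone hunit
    refine partialFractionPivot_of_one_mem_span ?_ _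
    rw [htop]
    exact Submodule.mem_top

theorem exists_sum_zsmul_eq_zero_of_not_linearIndependent {ι σ : Type*} [Fintype ι]
    {χ : ι → σ → ℤ} (h : ¬ LinearIndependent ℚ (fun i l => (χ i l : ℚ))) :
    ∃ g : ι → ℤ, ∑ i, g i • χ i = 0 ∧ ∃ i, g i ≠ 0 := by
  rw [← Fintype.not_linearIndependent_iff]
  contrapose! h
  have hcast : Function.Injective ((Int.castAddHom ℚ).toIntLinearMap.compLeft σ) :=
    fun x y hxy => funext fun l => by simpa using congrFun hxy l
  exact (LinearIndependent.iff_fractionRing ℤ ℚ).mp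
    ((LinearMap.linearIndependent_iff _ (LinearMap.ker_eq_bot.mpr hcast)).mpr h)

/-- **Corollary to Proposition 3.2: `R = R_r`.** For a finite `Δ ⊂ ℂˣ × ℤ^r` with
`(1,0) ∉ Δ` and `d = ∏_{(a,χ)∈Δ}(1 − a e^χ)`, the element `d` is nonzero and every element
`f/dⁿ` of the fraction field can be written as a finite sum `Σⱼ gⱼ/d_{Sⱼ}^{nⱼ}` where each
`Sⱼ ⊆ Δ` has projection to `ℤ^r` consisting of linearly independent vectors; i.e. the
localization `A[d⁻¹]` equals `Σ_S A[d_S⁻¹]`. -/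
theorem stmt4 {r : ℕ} (Δ : Finset (ℂˣ × (Fin r → ℤ)))
    (hΔ : ((1 : ℂˣ), (0 : Fin r → ℤ)) ∉ Δ)
    (d : LaurentA r)
    (hd : d = ∏ p ∈ Δ, ((1 : LaurentA r) - AddMonoidAlgebra.single p.2 ((p.1 : ℂ)))) :
    d ≠ 0 ∧
    ∀ (f : LaurentA r) (n : ℕ),
      ∃ (m : ℕ) (S : Fin m → Finset (ℂˣ × (Fin r → ℤ)))
        (g : Fin m → LaurentA r) (e : Fin m → ℕ),
        (∀ j, S j ⊆ Δ) ∧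
        (∀ j, LinearIndependent ℚ
          (fun (p : {x // x ∈ S j}) (l : Fin r) => ((p.1.2 l : ℚ)))) ∧
        algebraMap (LaurentA r) (FractionRing (LaurentA r)) f *
            ((algebraMap (LaurentA r) (FractionRing (LaurentA r)) d) ^ n)⁻¹ =
          ∑ j, algebraMap (LaurentA r) (FractionRing (LaurentA r)) (g j) *
            ((algebraMap (LaurentA r) (FractionRing (LaurentA r))
              (∏ p ∈ S j, ((1 : LaurentA r) - AddMonoidAlgebra.single p.2 ((p.1 : ℂ))))) ^ (e j))⁻¹ := by
  classical
  have hu : ∀ p ∈ Δ, (1 : LaurentA r) - AddMonoidAlgebra.single p.2 (p.1 : ℂ) ≠ 0 :=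
    fun p hp => one_sub_single_ne_zero (ne_of_mem_of_not_mem hp hΔ)
  subst hd
  refine ⟨prod_ne_zero_iff.mpr hu, fun f n => ?_⟩
  set φ := algebraMap (LaurentA r) (FractionRing (LaurentA r))
  let M : Submodule (LaurentA r) (FractionRing (LaurentA r)) := Submodule.span _
    {x | ∃ S ⊆ Δ, LinearIndependent ℚ (fun (p : {x // x ∈ S}) (l : Fin r) => ((p.1.2 l : ℚ))) ∧
      ∃ e : ℕ, x = (φ (∏ p ∈ S, (1 - AddMonoidAlgebra.single p.2 (p.1 : ℂ))) ^ e)⁻¹}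
  have hφu : ∀ p ∈ Δ, φ (1 - AddMonoidAlgebra.single p.2 (p.1 : ℂ)) ≠ 0 := fun p hp =>
    (map_ne_zero_iff _ (IsFractionRing.injective _ _)).mpr (hu p hp)
  have hmem : φ f * (φ (∏ p ∈ Δ, (1 - AddMonoidAlgebra.single p.2 (p.1 : ℂ))) ^ n)⁻¹ ∈ M := by
    rw [map_prod, ← prod_pow, ← prod_inv_distrib]
    simp_rw [← inv_pow]
    refine M.algebraMap_mul_mem f
      (prod_inv_pow_mem_of_forall_subset hφu (fun T hT => ?_) subset_rfl fun _ => n)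
    by_cases hind : LinearIndependent ℚ (fun (p : {x // x ∈ T}) (l : Fin r) => ((p.1.2 l : ℚ)))
    · exact .inl fun e => Submodule.subset_span ⟨T, hT, hind, e, rfl⟩
    · obtain ⟨g, hg, t₀, ht₀⟩ := exists_sum_zsmul_eq_zero_of_not_linearIndependent hind
      exact .inr ⟨t₀, t₀.2, partialFractionPivot_of_sum_zsmul_eq_zero g hg ht₀⟩
  obtain ⟨m, g, x, hx⟩ := Submodule.mem_span_set'.mp hmem
  choose S hS hind e he using fun j => (x j).2
  exact ⟨m, S, g, e, hS, hind, by
    rw [← hx]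
    exact sum_congr rfl fun j _ => by rw [Algebra.smul_def, he]⟩
end

section
/- Let R be a commutative ring and z₁, …, z_k ∈ R a sequence of elements such that every permutation of (z₁,…,z_k) is a regular sequence. Set w = z₁⋯z_k and, for each i, w_i = ∏_{j≠i} z_j. Since each w_i divides w, there are canonical R-algebra maps Localization.Away w_i → Localization.Away w; let N ⊆ Localization.Away w be the R-submodule generated by the union of their images. Then for r ∈ R the element r·(1/w) lies in N if and only if r belongs to the ideal (z₁,…,z_k); consequently the R-submodule of (Localization.Away w)/N generated by the class of 1/w is isomorphic to R/(z₁,…,z_k) as an R-module, and it is nonzero whenever (z₁,…,z_k) is a proper ideal. (Lemma 2.3, part 2: the annihilator of the class of (z₁⋯z_k)^{-1} in the top Čech cohomology H^k(C(R, z)) is (z₁,…,z_k).) -/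
/-- A sequence `z : Fin k → R` is regular if each `z i` is a non-zero-divisor modulo the
ideal generated by the previous elements. -/
def IsRegSeq {R : Type*} [CommRing R] {k : ℕ} (z : Fin k → R) : Prop :=
  ∀ i : Fin k, ∀ x : R,
    z i * x ∈ Ideal.span {y | ∃ j : Fin k, j < i ∧ z j = y} →
      x ∈ Ideal.span {y | ∃ j : Fin k, j < i ∧ z j = y}

/-- The canonical map `R[w_i⁻¹] → R[w⁻¹]`, where `w = ∏ⱼ zⱼ` and `w_i = ∏_{j≠i} zⱼ`,
induced by the divisibility `w_i ∣ w`. -/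
noncomputable def awayPartialMap {R : Type*} [CommRing R] {k : ℕ} (z : Fin k → R)
    (i : Fin k) :
    Localization.Away (∏ j ∈ Finset.univ.erase i, z j) →+* Localization.Away (∏ j, z j) :=
  Localization.awayLift (algebraMap R (Localization.Away (∏ j, z j)))
    (∏ j ∈ Finset.univ.erase i, z j)
    (by
      have h : (∏ j ∈ Finset.univ.erase i, z j) * z i = ∏ j, z j :=
        Finset.prod_erase_mul _ _ (Finset.mem_univ i)
      have hu : IsUnit (algebraMap R (Localization.Away (∏ j, z j))
          (∏ j ∈ Finset.univ.erase i, z j) *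
          algebraMap R (Localization.Away (∏ j, z j)) (z i)) := by
        rw [← map_mul, h]
        exact IsLocalization.Away.algebraMap_isUnit _
      exact isUnit_of_mul_isUnit_left hu)

/-!
If the `zᵢ` form a regular sequence in every order, then so do arbitrary powers `zᵢ ^ aᵢ`
(raise one exponent at a time). With `J` the ideal generated by the powers of the other `zⱼ`,
`zᵢ` is then a non-zero-divisor modulo `J`, so `zᵢ ^ m * y ∈ J + (zᵢ ^ (a + m))` forces
`y ∈ J + (zᵢ ^ a)`. Dividing by `w ^ t` one factor `zᵢ ^ t` at a time, a relation
`w ^ t * r ∈ (z₁ ^ (t + 1), …, z_k ^ (t + 1))` gives `r ∈ (z₁, …, z_k)`.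

Since `a / wᵢ ^ n = a zᵢ ^ n / w ^ n`, every element of `N` is `b / w ^ n` with
`b ∈ (z₁ ^ n, …, z_k ^ n)`, so `r / w ∈ N` yields such a relation; conversely `zᵢ / w = 1 / wᵢ`
lies in `N`. Hence the annihilator of the class of `1 / w` in `R[w⁻¹] ⧸ N` is `(z₁, …, z_k)`,
and `R ∙ x ≃ R ⧸ ann x`.
-/

open Ideal

section

variable {R : Type*} [CommRing R]

def Ideal.IsNonZeroDivisorMod (J : Ideal R) (x : R) : Prop :=
  ∀ y, x * y ∈ J → y ∈ J

namespace Ideal.IsNonZeroDivisorMod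

variable {J : Ideal R} {x : R}

theorem pow (hx : J.IsNonZeroDivisorMod x) (n : ℕ) : J.IsNonZeroDivisorMod (x ^ n) := by
  induction n with
  | zero => simp [IsNonZeroDivisorMod]
  | succ n ih => exact fun y hy ↦ hx y (ih _ (by rwa [← mul_assoc, ← pow_succ]))

theorem mem_span_singleton_pow_sup_of_pow_mul_mem (hx : J.IsNonZeroDivisorMod x) {m n : ℕ}
    {y : R} (hy : x ^ m * y ∈ span {x ^ (n + m)} ⊔ J) : y ∈ span {x ^ n} ⊔ J := by
  obtain ⟨a, b, hb, hab⟩ := mem_span_singleton_sup.mp hy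
  have hrem : y - a * x ^ n ∈ J := (hx.pow m) _ (by
    have : x ^ m * (y - a * x ^ n) = b := by linear_combination -hab
    rwa [this])
  exact mem_span_singleton_sup.mpr ⟨a, _, hrem, by ring⟩

theorem span_singleton_pow_sup (hx : J.IsNonZeroDivisorMod x) {y : R}
    (hy : (span {x} ⊔ J).IsNonZeroDivisorMod y) (n : ℕ) :
    (span {x ^ n} ⊔ J).IsNonZeroDivisorMod y := by
  induction n with
  | zero => simp [IsNonZeroDivisorMod]
  | succ n ih =>
    intro r hr
    have hle : span {x ^ (n + 1)} ⊔ J ≤ span {x ^ n} ⊔ J :=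
      sup_le_sup_right (span_singleton_le_span_singleton.mpr (pow_dvd_pow x n.le_succ)) J
    obtain ⟨s, j, hj, rfl⟩ := mem_span_singleton_sup.mp (ih r (hle hr))
    have hys : x ^ n * (y * s) ∈ span {x ^ (1 + n)} ⊔ J := by
      have : x ^ n * (y * s) = y * (s * x ^ n + j) - y * j := by ring
      rw [this, add_comm 1 n]
      exact sub_mem hr (mem_sup_right (J.mul_mem_left y hj))
    obtain ⟨t, j', hj', rfl⟩ := mem_span_singleton_sup.mp
      (hy _ (by simpa using hx.mem_span_singleton_pow_sup_of_pow_mul_mem hys))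
    refine mem_span_singleton_sup.mpr ⟨t, j' * x ^ n + j, add_mem (J.mul_mem_right _ hj') hj, ?_⟩
    ring

end Ideal.IsNonZeroDivisorMod

def IsRegularInAnyOrder {ι : Type*} (z : ι → R) : Prop :=
  ∀ (S : Finset ι) (i : ι), i ∉ S → (span (z '' S)).IsNonZeroDivisorMod (z i)

end

theorem Fin.exists_perm_apply_eq_and_image_Iio_eq {k : ℕ} (S : Finset (Fin k)) {i : Fin k}
    (hi : i ∉ S) : ∃ (σ : Equiv.Perm (Fin k)) (m : Fin k), σ m = i ∧ σ '' Set.Iio m = S := by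
  set l := S.toList ++ i :: (insert i S)ᶜ.toList
  have hnodup : l.Nodup := by
    refine List.nodup_append.mpr
      ⟨S.nodup_toList, List.nodup_cons.mpr ⟨by simp, Finset.nodup_toList _⟩, ?_⟩
    rintro a ha b hb rfl
    rw [Finset.mem_toList] at ha
    rcases List.mem_cons.mp hb with rfl | hb
    · exact hi ha
    · simp [ha] at hb
  have hmem : ∀ x, x ∈ l := by
    intro x; by_cases hx : x ∈ S <;> by_cases hxi : x = i <;> simp [l, hx, hxi]
  let e := hnodup.getEquivOfForallMemList l hmem
  have hlen : l.length = k := by simpa using Fintype.card_congr e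
  have hS : S.toList.length < k := by simp [← hlen, l]
  refine ⟨(finCongr hlen.symm).trans e, ⟨S.toList.length, hS⟩, by simp [e, l], ?_⟩
  ext x
  rw [Set.mem_image, Finset.mem_coe, ← Finset.mem_toList, List.mem_iff_getElem]
  constructor
  · rintro ⟨j, hj, rfl⟩
    have hj' : (j : ℕ) < S.toList.length := hj
    exact ⟨j, hj', by simp [e, l, List.getElem_append_left hj']⟩
  · rintro ⟨j, hj, rfl⟩
    exact ⟨⟨j, hj.trans hS⟩, hj, by simp [e, l, List.getElem_append_left hj]⟩

theorem isRegularInAnyOrder_of_forall_perm {R : Type*} [CommRing R] {k : ℕ} {z : Fin k → R}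
    (hreg : ∀ σ : Equiv.Perm (Fin k), IsRegSeq (z ∘ σ)) : IsRegularInAnyOrder z := by
  intro S i hi y hy
  obtain ⟨σ, m, hσm, hσ⟩ := Fin.exists_perm_apply_eq_and_image_Iio_eq S hi
  have hspan : {y | ∃ j, j < m ∧ (z ∘ σ) j = y} = z '' S := by
    rw [← hσ, ← Set.image_comp]
    rfl
  have hreg_m := hreg σ m y
  rw [hspan, Function.comp_apply, hσm] at hreg_m
  exact hreg_m hy

theorem Ideal.span_range_eq_span_singleton_sup {R ι : Type*} [CommRing R] [Fintype ι]
    [DecidableEq ι] (f : ι → R) (i : ι) :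
    span (Set.range f) = span {f i} ⊔ span (f '' ↑(Finset.univ.erase i)) := by
  rw [← span_insert, ← Set.image_insert_eq, ← Finset.coe_insert, Finset.insert_erase
    (Finset.mem_univ i), Finset.coe_univ, Set.image_univ]

namespace IsRegularInAnyOrder

variable {R ι : Type*} [CommRing R] {z : ι → R}

theorem update_pow [DecidableEq ι] (h : IsRegularInAnyOrder z) (i : ι) (n : ℕ) :
    IsRegularInAnyOrder (Function.update z i (z i ^ n)) := by
  intro S j hj
  have himage : ∀ T : Finset ι, i ∉ T → Function.update z i (z i ^ n) '' T = z '' T :=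
    fun T hT ↦ Set.image_congr fun t ht ↦ Function.update_of_ne (by rintro rfl; exact hT ht) _ _
  by_cases hji : j = i
  · subst hji
    rw [himage S hj, Function.update_self]
    exact (h S j hj).pow n
  rw [Function.update_of_ne hji]
  by_cases hiS : i ∈ S
  · have hsplit : Function.update z i (z i ^ n) '' S =
        insert (z i ^ n) (z '' ↑(S.erase i)) := by
      conv_lhs => rw [← Finset.insert_erase hiS]
      rw [Finset.coe_insert, Set.image_insert_eq, Function.update_self,
        himage _ (S.notMem_erase i)]
    have hS : span (z '' S) = span {z i} ⊔ span (z '' ↑(S.erase i)) := by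
      rw [← span_insert, ← Set.image_insert_eq, ← Finset.coe_insert, Finset.insert_erase hiS]
    rw [hsplit, span_insert]
    refine (h _ i (S.notMem_erase i)).span_singleton_pow_sup ?_ n
    rw [← hS]
    exact h S j hj
  · rw [himage S hiS]
    exact h S j hj

theorem ite_pow [DecidableEq ι] (h : IsRegularInAnyOrder z) (T : Finset ι) (a : ι → ℕ) :
    IsRegularInAnyOrder fun j ↦ if j ∈ T then z j ^ a j else z j := by
  induction T using Finset.induction_on with
  | empty => simpa using h
  | insert i T hiT ih =>
    convert ih.update_pow i (a i) using 1
    funext j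
    by_cases hji : j = i
    · subst hji; simp [hiT]
    · simp [hji]

theorem pow [Fintype ι] (h : IsRegularInAnyOrder z) (a : ι → ℕ) :
    IsRegularInAnyOrder fun j ↦ z j ^ a j := by
  classical
  simpa using h.ite_pow Finset.univ a

theorem mem_span_pow_of_pow_mul_mem [Fintype ι] [DecidableEq ι] (h : IsRegularInAnyOrder z)
    (a : ι → ℕ) (i : ι) (m : ℕ) {y : R}
    (hy : z i ^ m * y ∈ span (Set.range fun j ↦ z j ^ Function.update a i (a i + m) j)) :
    y ∈ span (Set.range fun j ↦ z j ^ a j) := by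
  have himage : ∀ b : ℕ, (fun j ↦ z j ^ Function.update a i b j) '' ↑(Finset.univ.erase i) =
      (fun j ↦ z j ^ a j) '' ↑(Finset.univ.erase i) := fun b ↦ Set.image_congr fun j hj ↦ by
    rw [Function.update_of_ne (Finset.ne_of_mem_erase hj)]
  have hx := h.pow (Function.update a i 1) _ i (Finset.univ.notMem_erase i)
  simp only [himage, Function.update_self, pow_one] at hx
  rw [span_range_eq_span_singleton_sup _ i, himage, Function.update_self] at hy
  rw [span_range_eq_span_singleton_sup _ i]
  exact hx.mem_span_singleton_pow_sup_of_pow_mul_mem hy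

theorem mem_span_pow_of_prod_pow_mul_mem [Fintype ι] (h : IsRegularInAnyOrder z) (a : ι → ℕ)
    (m : ℕ) {y : R} (hy : (∏ j, z j) ^ m * y ∈ span (Set.range fun j ↦ z j ^ (a j + m))) :
    y ∈ span (Set.range fun j ↦ z j ^ a j) := by
  classical
  suffices ∀ (s : Finset ι) (y : R), (∏ j ∈ s, z j ^ m) * y ∈
      span (Set.range fun j ↦ z j ^ if j ∈ s then a j + m else a j) →
      y ∈ span (Set.range fun j ↦ z j ^ a j) from
    this Finset.univ y (by simpa [Finset.prod_pow] using hy)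
  intro s
  induction s using Finset.induction_on with
  | empty => simp
  | insert i s his ih =>
    intro y hy
    refine ih _ (h.mem_span_pow_of_pow_mul_mem _ i m ?_)
    rw [Finset.prod_insert his, mul_assoc] at hy
    convert hy using 5 with j
    by_cases hji : j = i
    · subst hji; simp [his]
    · simp [hji]

end IsRegularInAnyOrder

theorem Ideal.mul_prod_pow_mem_span_range_pow {R ι : Type*} [CommRing R] [Fintype ι]
    {z : ι → R} {n : ℕ} {b : R} (hb : b ∈ span (Set.range fun j ↦ z j ^ n)) (m : ℕ) :
    b * (∏ j, z j) ^ m ∈ span (Set.range fun j ↦ z j ^ (n + m)) := by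
  classical
  have hle : span (Set.range fun j ↦ z j ^ n) * span {(∏ j, z j) ^ m} ≤
      span (Set.range fun j ↦ z j ^ (n + m)) := by
    rw [span_mul_span', span_le]
    rintro _ ⟨_, ⟨j, rfl⟩, _, rfl, rfl⟩
    have : z j ^ n * (∏ j, z j) ^ m = z j ^ (n + m) * (∏ l ∈ Finset.univ.erase j, z l) ^ m := by
      rw [← Finset.mul_prod_erase _ _ (Finset.mem_univ j)]; ring
    change z j ^ n * _ ∈ _
    rw [this]
    exact mul_mem_right _ _ (subset_span ⟨j, rfl⟩)
  exact hle (mul_mem_mul hb (mem_span_singleton_self _))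

section awayPartialMap

variable {R : Type*} [CommRing R] {k : ℕ} (z : Fin k → R)

local notation "w" => ∏ j, z j
local notation "w_" i => ∏ j ∈ Finset.univ.erase i, z j

theorem awayPartialMap_algebraMap (i : Fin k) (r : R) :
    awayPartialMap z i (algebraMap R (Localization.Away (w_ i)) r) =
      algebraMap R (Localization.Away w) r := by
  unfold awayPartialMap
  exact IsLocalization.Away.lift_eq _ _ r

theorem algebraMap_prod_eq_prod_erase_mul (i : Fin k) :
    algebraMap R (Localization.Away w) w =
      algebraMap R (Localization.Away w) (w_ i) * algebraMap R (Localization.Away w) (z i) := by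
  rw [← map_mul, Finset.prod_erase_mul _ _ (Finset.mem_univ i)]

theorem awayPartialMap_invSelf (i : Fin k) :
    awayPartialMap z i (IsLocalization.Away.invSelf (S := Localization.Away (w_ i)) (w_ i)) =
      algebraMap R (Localization.Away w) (z i) *
        IsLocalization.Away.invSelf (S := Localization.Away w) w := by
  refine left_inv_eq_right_inv (a := algebraMap R (Localization.Away w) (w_ i)) ?_ ?_
  · rw [← awayPartialMap_algebraMap, ← map_mul, mul_comm, IsLocalization.Away.mul_invSelf,
      map_one]
  · rw [← mul_assoc, ← algebraMap_prod_eq_prod_erase_mul, IsLocalization.Away.mul_invSelf]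

theorem exists_mul_pow_eq_of_mem_span_range_awayPartialMap {x : Localization.Away w}
    (hx : x ∈ Submodule.span R (⋃ i, Set.range (awayPartialMap z i))) :
    ∃ n, ∃ b ∈ Ideal.span (Set.range fun j ↦ z j ^ n),
      x * algebraMap R _ w ^ n = algebraMap R _ b := by
  induction hx using Submodule.span_induction with
  | mem x hx =>
    obtain ⟨i, u, rfl⟩ := Set.mem_iUnion.mp hx
    obtain ⟨n, a, hu⟩ := IsLocalization.Away.surj (w_ i) u
    refine ⟨n, a * z i ^ n, Ideal.mul_mem_left _ _ (Ideal.subset_span ⟨i, rfl⟩), ?_⟩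
    have hu' := congrArg (awayPartialMap z i) hu
    rw [map_mul, map_pow, awayPartialMap_algebraMap, awayPartialMap_algebraMap] at hu'
    rw [algebraMap_prod_eq_prod_erase_mul z i, mul_pow, ← mul_assoc, hu', map_mul, map_pow]
  | zero => exact ⟨0, 0, zero_mem _, by simp⟩
  | add x y _ _ hx hy =>
    obtain ⟨n₁, b₁, hb₁, hx⟩ := hx
    obtain ⟨n₂, b₂, hb₂, hy⟩ := hy
    refine ⟨n₁ + n₂, b₁ * w ^ n₂ + b₂ * w ^ n₁,
      add_mem (Ideal.mul_prod_pow_mem_span_range_pow hb₁ n₂) ?_, ?_⟩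
    · rw [add_comm n₁]
      exact Ideal.mul_prod_pow_mem_span_range_pow hb₂ n₁
    · simp only [map_add, map_mul, map_pow, ← hx, ← hy]
      ring
  | smul r x _ hx =>
    obtain ⟨n, b, hb, hx⟩ := hx
    refine ⟨n, r * b, Ideal.mul_mem_left _ _ hb, ?_⟩
    rw [map_mul, Algebra.smul_def, mul_assoc, hx]

theorem smul_invSelf_mem_span_range_awayPartialMap_iff (hz : IsRegularInAnyOrder z) (r : R) :
    r • IsLocalization.Away.invSelf (S := Localization.Away w) w ∈
        Submodule.span R (⋃ i, Set.range (awayPartialMap z i)) ↔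
      r ∈ Ideal.span (Set.range z) := by
  set u := IsLocalization.Away.invSelf (S := Localization.Away w) w
  constructor
  · intro hr
    obtain ⟨n, b, hb, he⟩ := exists_mul_pow_eq_of_mem_span_range_awayPartialMap z hr
    have hloc : algebraMap R (Localization.Away w) (r * w ^ n) =
        algebraMap R (Localization.Away w) (b * w) := by
      rw [Algebra.smul_def] at he
      rw [map_mul, map_mul, map_pow]
      linear_combination algebraMap R (Localization.Away w) w * he -
        (algebraMap R _ r * algebraMap R _ w ^ n) *
          IsLocalization.Away.mul_invSelf (S := Localization.Away w) w
    obtain ⟨m, hm⟩ := IsLocalization.Away.exists_of_eq w hloc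
    have hmul : w ^ (m + n) * r = b * w ^ (m + 1) := by linear_combination hm
    have hmem := Ideal.mul_prod_pow_mem_span_range_pow hb (m + 1)
    rw [← hmul, show n + (m + 1) = 1 + (m + n) by ring] at hmem
    simpa using hz.mem_span_pow_of_prod_pow_mul_mem (fun _ ↦ 1) (m + n) hmem
  · intro hr
    have hle : Ideal.span (Set.range z) ≤ (Submodule.span R
        (⋃ i, Set.range (awayPartialMap z i))).comap (LinearMap.toSpanSingleton R _ u) := by
      rw [Ideal.span_le]
      rintro _ ⟨i, rfl⟩
      rw [SetLike.mem_coe, Submodule.mem_comap, LinearMap.toSpanSingleton_apply,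
        Algebra.smul_def, ← awayPartialMap_invSelf]
      exact Submodule.subset_span (Set.mem_iUnion.mpr ⟨i, Set.mem_range_self _⟩)
    exact hle hr

end awayPartialMap

theorem Ideal.torsionOf_quotient_mk_eq {R M : Type*} [CommRing R] [AddCommGroup M] [Module R M]
    {N : Submodule R M} {x : M} {I : Ideal R} (h : ∀ r : R, r • x ∈ N ↔ r ∈ I) :
    torsionOf R (M ⧸ N) (Submodule.Quotient.mk x) = I := by
  ext r
  rw [mem_torsionOf_iff, ← Submodule.Quotient.mk_smul, Submodule.Quotient.mk_eq_zero, h]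

/-- **Lemma 2.3, part 2.** Let `z₁,…,z_k ∈ R` be such that every permutation of them is a
regular sequence, `w = z₁⋯z_k`, `w_i = ∏_{j≠i} z_j`, and let `N ⊆ R[w⁻¹]` be the
`R`-submodule generated by the images of the canonical maps `R[w_i⁻¹] → R[w⁻¹]`. Then
`r·(1/w) ∈ N` iff `r ∈ (z₁,…,z_k)`; consequently the `R`-submodule of `R[w⁻¹]/N` generated
by the class of `1/w` is isomorphic to `R/(z₁,…,z_k)`, and it is nonzero whenever
`(z₁,…,z_k)` is a proper ideal. -/
theorem stmt5 {R : Type*} [CommRing R] {k : ℕ} (z : Fin k → R)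
    (hreg : ∀ σ : Equiv.Perm (Fin k), IsRegSeq (z ∘ σ))
    (N : Submodule R (Localization.Away (∏ j, z j)))
    (hN : N = Submodule.span R (⋃ i, Set.range (awayPartialMap z i))) :
    (∀ r : R,
      algebraMap R (Localization.Away (∏ j, z j)) r *
          IsLocalization.Away.invSelf (S := Localization.Away (∏ j, z j)) (∏ j, z j) ∈ N ↔
        r ∈ Ideal.span (Set.range z)) ∧
    Nonempty
      ((Submodule.span R
          {(Submodule.Quotient.mk
            (IsLocalization.Away.invSelf (S := Localization.Away (∏ j, z j)) (∏ j, z j)) :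
              Localization.Away (∏ j, z j) ⧸ N)}) ≃ₗ[R] (R ⧸ Ideal.span (Set.range z))) ∧
    (Ideal.span (Set.range z) ≠ ⊤ →
      Submodule.span R
          {(Submodule.Quotient.mk
            (IsLocalization.Away.invSelf (S := Localization.Away (∏ j, z j)) (∏ j, z j)) :
              Localization.Away (∏ j, z j) ⧸ N)} ≠ ⊥) := by
  subst hN
  have hmem := smul_invSelf_mem_span_range_awayPartialMap_iff z
    (isRegularInAnyOrder_of_forall_perm hreg)
  have htorsion := Ideal.torsionOf_quotient_mk_eq hmem
  refine ⟨fun r ↦ by rw [← Algebra.smul_def]; exact hmem r,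
    ⟨(Ideal.quotTorsionOfEquivSpanSingleton R _ _).symm.trans
      (Submodule.quotEquivOfEq _ _ htorsion)⟩, fun hI ↦ ?_⟩
  rwa [Ne, Submodule.span_singleton_eq_bot, ← Ideal.torsionOf_eq_top_iff R, htorsion]
end

section
/- Let R be a commutative ring and z₁, z₂ ∈ R such that both (z₁, z₂) and (z₂, z₁) are regular sequences. Suppose u ∈ Localization.Away z₁ and v ∈ Localization.Away z₂ have equal images in Localization.Away (z₁·z₂) under the canonical R-algebra maps. Then there exists r ∈ R whose canonical images in Localization.Away z₁ and Localization.Away z₂ are u and v respectively. (Lemma 2.3, part 1, in the case k = 2: vanishing of the middle cohomology H¹ of the Čech complex 0 → R → R[z₁^{-1}] ⊕ R[z₂^{-1}] → R[(z₁z₂)^{-1}] → 0.) -/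
/-- The canonical map `R[x⁻¹] → R[(xy)⁻¹]`. -/
noncomputable def awayMapLeft {R : Type*} [CommRing R] (x y : R) :
    Localization.Away x →+* Localization.Away (x * y) :=
  Localization.awayLift (algebraMap R (Localization.Away (x * y))) x
    (by
      have hu : IsUnit (algebraMap R (Localization.Away (x * y)) x *
          algebraMap R (Localization.Away (x * y)) y) := by
        rw [← map_mul]
        exact IsLocalization.Away.algebraMap_isUnit _
      exact isUnit_of_mul_isUnit_left hu)

/-- The canonical map `R[y⁻¹] → R[(xy)⁻¹]`. -/
noncomputable def awayMapRight {R : Type*} [CommRing R] (x y : R) :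
    Localization.Away y →+* Localization.Away (x * y) :=
  Localization.awayLift (algebraMap R (Localization.Away (x * y))) y
    (by
      have hu : IsUnit (algebraMap R (Localization.Away (x * y)) x *
          algebraMap R (Localization.Away (x * y)) y) := by
        rw [← map_mul]
        exact IsLocalization.Away.algebraMap_isUnit _
      exact isUnit_of_mul_isUnit_right hu)


section AuxStmt6
variable {R : Type*} [CommRing R]

lemma aux_pow1 {z₁ z₂ : R} (h1 : ∀ x : R, z₁ * x = 0 → x = 0)
    (h2 : ∀ x : R, z₂ * x ∈ Ideal.span {z₁} → x ∈ Ideal.span {z₁}) :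
    ∀ n : ℕ, ∀ x : R, z₂ * x ∈ Ideal.span {z₁ ^ n} → x ∈ Ideal.span {z₁ ^ n} := by
  intro n
  induction n with
  | zero => intro x _; exact Ideal.mem_span_singleton.mpr (pow_zero z₁ ▸ one_dvd x)
  | succ n ih =>
    intro x hx
    obtain ⟨y, hy⟩ := Ideal.mem_span_singleton.mp hx
    have hx1 : z₂ * x ∈ Ideal.span {z₁} := Ideal.mem_span_singleton.mpr
      ⟨z₁ ^ n * y, by rw [hy, pow_succ]; ring⟩
    obtain ⟨x', hx'⟩ := Ideal.mem_span_singleton.mp (h2 x hx1)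
    have heq : z₁ * (z₂ * x' - z₁ ^ n * y) = 0 := by
      have : z₂ * x = z₁ ^ (n + 1) * y := hy
      rw [hx'] at this
      rw [mul_sub]
      rw [pow_succ] at this
      calc z₁ * (z₂ * x') - z₁ * (z₁ ^ n * y) = z₂ * (z₁ * x') - z₁ ^ n * z₁ * y := by ring
        _ = 0 := by rw [this]; ring
    have h3 : z₂ * x' = z₁ ^ n * y := sub_eq_zero.mp (h1 _ heq)
    obtain ⟨w, hw⟩ := Ideal.mem_span_singleton.mp
      (ih x' (Ideal.mem_span_singleton.mpr ⟨y, h3⟩))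
    exact Ideal.mem_span_singleton.mpr ⟨w, by rw [hx', hw, pow_succ]; ring⟩

lemma aux_pow2 {z₁ z₂ : R} (h1 : ∀ x : R, z₁ * x = 0 → x = 0)
    (h2 : ∀ x : R, z₂ * x ∈ Ideal.span {z₁} → x ∈ Ideal.span {z₁}) (n : ℕ) :
    ∀ m : ℕ, ∀ x : R, z₂ ^ m * x ∈ Ideal.span {z₁ ^ n} → x ∈ Ideal.span {z₁ ^ n} := by
  intro m
  induction m with
  | zero => intro x hx; simpa using hx
  | succ m ih =>
    intro x hx
    have : z₂ ^ m * (z₂ * x) ∈ Ideal.span {z₁ ^ n} := by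
      rw [show z₂ ^ m * (z₂ * x) = z₂ ^ (m + 1) * x by ring]; exact hx
    exact aux_pow1 h1 h2 n x (ih _ this)

end AuxStmt6

/-- **Lemma 2.3, part 1 (case k = 2).** If `(z₁, z₂)` and `(z₂, z₁)` are regular sequences
in `R`, and `u ∈ R[z₁⁻¹]`, `v ∈ R[z₂⁻¹]` have the same image in `R[(z₁z₂)⁻¹]`, then they
come from a common element `r ∈ R`: vanishing of `H¹` of the Čech complex
`0 → R → R[z₁⁻¹] ⊕ R[z₂⁻¹] → R[(z₁z₂)⁻¹] → 0`. -/
theorem stmt6 {R : Type*} [CommRing R] (z₁ z₂ : R)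
    (h12 : IsRegSeq ![z₁, z₂]) (h21 : IsRegSeq ![z₂, z₁])
    (u : Localization.Away z₁) (v : Localization.Away z₂)
    (huv : awayMapLeft z₁ z₂ u = awayMapRight z₁ z₂ v) :
    ∃ r : R, algebraMap R (Localization.Away z₁) r = u ∧
      algebraMap R (Localization.Away z₂) r = v := by
  have h1nzd : ∀ x : R, z₁ * x = 0 → x = 0 := by
    intro x hx
    have hset : {y | ∃ j : Fin 2, j < 0 ∧ ![z₁, z₂] j = y} = (∅ : Set R) := by
      ext y
      simp only [Set.mem_setOf_eq, Set.mem_empty_iff_false, iff_false, not_exists]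
      rintro j ⟨hj, -⟩
      simp [Fin.lt_def] at hj
    have h := h12 0 x
    rw [hset, Ideal.span_empty] at h
    simp only [Matrix.cons_val_zero] at h
    simpa using h (Ideal.mem_bot.mpr hx)
  have h2nzd : ∀ x : R, z₂ * x = 0 → x = 0 := by
    intro x hx
    have hset : {y | ∃ j : Fin 2, j < 0 ∧ ![z₂, z₁] j = y} = (∅ : Set R) := by
      ext y
      simp only [Set.mem_setOf_eq, Set.mem_empty_iff_false, iff_false, not_exists]
      rintro j ⟨hj, -⟩
      simp [Fin.lt_def] at hj
    have h := h21 0 x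
    rw [hset, Ideal.span_empty] at h
    simp only [Matrix.cons_val_zero] at h
    simpa using h (Ideal.mem_bot.mpr hx)
  have h2mod1 : ∀ x : R, z₂ * x ∈ Ideal.span {z₁} → x ∈ Ideal.span {z₁} := by
    intro x hx
    have hset : {y | ∃ j : Fin 2, j < 1 ∧ ![z₁, z₂] j = y} = ({z₁} : Set R) := by
      ext y
      constructor
      · rintro ⟨j, hj, rfl⟩
        have hj0 : j = 0 := by
          have := hj
          rw [Fin.lt_def] at this
          omega
        subst hj0; simp
      · rintro rfl; exact ⟨0, by simp [Fin.lt_def], rfl⟩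
    have h := h12 1 x
    rw [hset] at h
    simp only [Matrix.cons_val_one, Matrix.head_cons] at h
    exact h hx
  obtain ⟨n, a, ha⟩ := IsLocalization.Away.surj z₁ u
  obtain ⟨m, b, hb⟩ := IsLocalization.Away.surj z₂ v
  rw [← map_pow] at ha hb
  set S := Localization.Away (z₁ * z₂)
  set φ := algebraMap R S with hφ
  have hz1 : IsUnit (algebraMap R (Localization.Away (z₁ * z₂)) z₁) := by
    apply isUnit_of_mul_isUnit_left (y := algebraMap R (Localization.Away (z₁ * z₂)) z₂)
    rw [← map_mul]
    exact IsLocalization.Away.algebraMap_isUnit _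
  have hz2 : IsUnit (algebraMap R (Localization.Away (z₁ * z₂)) z₂) := by
    apply isUnit_of_mul_isUnit_right (x := algebraMap R (Localization.Away (z₁ * z₂)) z₁)
    rw [← map_mul]
    exact IsLocalization.Away.algebraMap_isUnit _
  have hFalg : ∀ x : R, awayMapLeft z₁ z₂ (algebraMap R (Localization.Away z₁) x) = φ x := by
    intro x
    unfold awayMapLeft
    exact IsLocalization.Away.lift_eq z₁ hz1 x
  have hGalg : ∀ x : R, awayMapRight z₁ z₂ (algebraMap R (Localization.Away z₂) x) = φ x := by
    intro x
    unfold awayMapRight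
    exact IsLocalization.Away.lift_eq z₂ hz2 x
  have hFu : awayMapLeft z₁ z₂ u * φ (z₁ ^ n) = φ a := by
    have := congrArg (awayMapLeft z₁ z₂) ha
    rwa [map_mul, hFalg, hFalg] at this
  have hGv : awayMapRight z₁ z₂ v * φ (z₂ ^ m) = φ b := by
    have := congrArg (awayMapRight z₁ z₂) hb
    rwa [map_mul, hGalg, hGalg] at this
  have key : φ (a * z₂ ^ m - b * z₁ ^ n) = 0 := by
    have hh : φ a * φ (z₂ ^ m) = φ b * φ (z₁ ^ n) := by
      rw [← hFu, ← hGv, huv]; ring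
    simp only [RingHom.map_sub, RingHom.map_mul] at hh ⊢
    rw [hh, sub_self]
  obtain ⟨⟨c, N, rfl⟩, hc⟩ := (IsLocalization.map_eq_zero_iff
    (Submonoid.powers (z₁ * z₂)) S _).mp key
  have hc' : (z₁ * z₂) ^ N * (a * z₂ ^ m - b * z₁ ^ n) = 0 := hc
  have hpow1 : ∀ k : ℕ, ∀ x : R, z₁ ^ k * x = 0 → x = 0 := by
    intro k
    induction k with
    | zero => intro x hx; simpa using hx
    | succ k ih => intro x hx; exact ih x (h1nzd _ (by rw [← hx, pow_succ]; ring))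
  have hpow2 : ∀ k : ℕ, ∀ x : R, z₂ ^ k * x = 0 → x = 0 := by
    intro k
    induction k with
    | zero => intro x hx; simpa using hx
    | succ k ih => intro x hx; exact ih x (h2nzd _ (by rw [← hx, pow_succ]; ring))
  have hc0 : a * z₂ ^ m - b * z₁ ^ n = 0 := by
    apply hpow2 N
    apply hpow1 N
    linear_combination hc'
  have hceq : a * z₂ ^ m = b * z₁ ^ n := sub_eq_zero.mp hc0
  have hmem : a ∈ Ideal.span {z₁ ^ n} := by
    apply aux_pow2 h1nzd h2mod1 n m
    exact Ideal.mem_span_singleton.mpr ⟨b, by linear_combination hceq⟩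
  obtain ⟨r, hr⟩ := Ideal.mem_span_singleton.mp hmem
  have hb' : b = z₂ ^ m * r := by
    have h0 : z₁ ^ n * (b - z₂ ^ m * r) = 0 := by
      linear_combination (-1 : R) * hceq + z₂ ^ m * hr
    exact sub_eq_zero.mp (hpow1 n _ h0)
  refine ⟨r, ?_, ?_⟩
  · have hu1 : IsUnit (algebraMap R (Localization.Away z₁) (z₁ ^ n)) :=
      IsLocalization.map_units (Localization.Away z₁)
        (⟨z₁ ^ n, n, rfl⟩ : Submonoid.powers z₁)
    apply hu1.mul_right_cancel
    rw [← map_mul, ha]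
    congr 1
    rw [hr]; ring
  · have hu2 : IsUnit (algebraMap R (Localization.Away z₂) (z₂ ^ m)) :=
      IsLocalization.map_units (Localization.Away z₂)
        (⟨z₂ ^ m, m, rfl⟩ : Submonoid.powers z₂)
    apply hu2.mul_right_cancel
    rw [← map_mul, hb]
    congr 1
    rw [hb']; ring
end

section
/- Let K be a field, n ≥ 1 an integer, and x₁, …, xₙ ∈ K with 1 − x_i ≠ 0 for all i and 1 − ∏_{i=1}^n x_i ≠ 0. Then Σ_{I ⊊ {1,…,n}} (1/(1 − ∏_{i=1}^n x_i)) · ∏_{i∈I} (x_i/(1 − x_i)) = 1/∏_{i=1}^n (1 − x_i), where the sum runs over all proper subsets I of {1,…,n}. (The rational-function identity underlying Proposition 5.1 in the case s = 0, i.e. identity (casozero).) -/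
/-!
Expanding `∏ i, (1 + xᵢ/(1 - xᵢ)) = ∏ i, 1/(1 - xᵢ)` gives the sum of `∏_{i∈I} xᵢ/(1 - xᵢ)` over
all subsets `I`. Removing the full subset, whose term is `∏ xᵢ / ∏ (1 - xᵢ)`, leaves
`(1 - ∏ xᵢ) / ∏ (1 - xᵢ)`, and the prefactor `1/(1 - ∏ xᵢ)` cancels the numerator.
-/

open Finset

section

variable {ι K : Type*} [Field K] {x : ι → K}

theorem Finset.sum_powerset_prod_div_one_sub (s : Finset ι) (hx : ∀ i ∈ s, 1 - x i ≠ 0) :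
    ∑ I ∈ s.powerset, ∏ i ∈ I, x i / (1 - x i) = 1 / ∏ i ∈ s, (1 - x i) := by
  rw [← prod_one_add, one_div, ← prod_inv_distrib]
  refine prod_congr rfl fun i hi => ?_
  field_simp [hx i hi]
  ring

theorem Finset.sum_powerset_erase_prod_div_one_sub [DecidableEq ι] (s : Finset ι)
    (hx : ∀ i ∈ s, 1 - x i ≠ 0) :
    ∑ I ∈ s.powerset.erase s, ∏ i ∈ I, x i / (1 - x i) =
      (1 - ∏ i ∈ s, x i) / ∏ i ∈ s, (1 - x i) := by
  rw [sum_erase_eq_sub (mem_powerset_self s), sum_powerset_prod_div_one_sub s hx,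
    prod_div_distrib, sub_div]

end

theorem stmt8_general {K : Type*} [Field K] (n : ℕ) (x : Fin n → K)
    (hx : ∀ i, 1 - x i ≠ 0) (hp : 1 - ∏ i, x i ≠ 0) :
    ∑ I ∈ Finset.univ.powerset.erase Finset.univ,
        (1 / (1 - ∏ i, x i)) * ∏ i ∈ I, (x i / (1 - x i)) =
      1 / ∏ i, (1 - x i) := by
  rw [← mul_sum, sum_powerset_erase_prod_div_one_sub univ fun i _ => hx i,
    ← mul_div_assoc, one_div_mul_cancel hp]

/-- **Identity (casozero) underlying Proposition 5.1 (case s = 0).**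
In a field, if `1 − xᵢ ≠ 0` for all `i` and `1 − ∏ xᵢ ≠ 0`, then
`Σ_{I ⊊ {1,…,n}} (1/(1 − ∏ xᵢ)) · ∏_{i∈I} (xᵢ/(1 − xᵢ)) = 1/∏ (1 − xᵢ)`. -/
theorem stmt8 {K : Type*} [Field K] (n : ℕ) (hn : 1 ≤ n) (x : Fin n → K)
    (hx : ∀ i, 1 - x i ≠ 0) (hp : 1 - ∏ i, x i ≠ 0) :
    ∑ I ∈ Finset.univ.powerset.erase Finset.univ,
        (1 / (1 - ∏ i, x i)) * ∏ i ∈ I, (x i / (1 - x i)) =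
      1 / ∏ i, (1 - x i) :=
  stmt8_general n x hx hp
end

section
/- Let K be a field, r ≥ 1 and 0 ≤ h ≤ r integers, z₁, …, z_r ∈ K with z_i ≠ 0 for all i > h, and a ∈ K with a ≠ 0. Set t = (∏_{i=1}^h z_i) · (∏_{i=h+1}^r z_i^{-1}). Then 1 − t = Σ_{∅ ≠ I ⊆ {1,…,h}} (−1)^{|I|+1} ∏_{i∈I}(1 − z_i) − a^{-1} Σ_{∅ ≠ I ⊆ {h+1,…,r}} (−1)^{|I|+1} ∏_{i∈I}(1 − z_i) + a^{-1} Σ_{∅ ≠ I ⊆ {h+1,…,r}} (−1)^{|I|+1} (∏_{i∈I}(1 − z_i)) · (1 − a t). (Lemma 7.2.) -/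
/-! Writing zᵢ = 1 - (1 - zᵢ) and expanding the product shows that the alternating sum over
the nonempty I ⊆ S equals 1 - ∏_{i ∈ S} zᵢ. With P and Q the products of the zᵢ over i < h and
over i ≥ h, so that t = P / Q, the right-hand side becomes (1 - P) - (1 - Q) t = 1 - t. -/

theorem Finset.sum_powerset_erase_empty_neg_one_pow_mul_prod_one_sub {ι R : Type*} [CommRing R]
    [DecidableEq ι] (s : Finset ι) (z : ι → R) :
    ∑ I ∈ s.powerset.erase ∅, (-1 : R) ^ (I.card + 1) * ∏ i ∈ I, (1 - z i) =
      1 - ∏ i ∈ s, z i := by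
  calc ∑ I ∈ s.powerset.erase ∅, (-1 : R) ^ (I.card + 1) * ∏ i ∈ I, (1 - z i)
      = -∑ I ∈ s.powerset.erase ∅, ∏ i ∈ I, -(1 - z i) := by
        simp only [Finset.prod_neg, pow_succ, ← Finset.sum_neg_distrib]
        exact Finset.sum_congr rfl fun I _ => by ring
    _ = -(∑ I ∈ s.powerset, ∏ i ∈ I, -(1 - z i) - 1) := by
        rw [Finset.sum_erase_eq_sub (Finset.empty_mem_powerset s), Finset.prod_empty]
    _ = 1 - ∏ i ∈ s, z i := by
        rw [← Finset.prod_one_add]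
        simp

theorem stmt10_general {K : Type*} [Field K] (r h : ℕ)
    (z : Fin r → K) (hz : ∀ i : Fin r, h ≤ (i : ℕ) → z i ≠ 0)
    (a : K) (ha : a ≠ 0) (t : K)
    (ht : t = (∏ i ∈ Finset.univ.filter (fun i : Fin r => (i : ℕ) < h), z i) *
              (∏ i ∈ Finset.univ.filter (fun i : Fin r => h ≤ (i : ℕ)), (z i)⁻¹)) :
    1 - t =
      (∑ I ∈ (Finset.univ.filter (fun i : Fin r => (i : ℕ) < h)).powerset.erase ∅,
        (-1 : K) ^ (I.card + 1) * ∏ i ∈ I, (1 - z i))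
      - a⁻¹ * (∑ I ∈ (Finset.univ.filter (fun i : Fin r => h ≤ (i : ℕ))).powerset.erase ∅,
        (-1 : K) ^ (I.card + 1) * ∏ i ∈ I, (1 - z i))
      + a⁻¹ * (∑ I ∈ (Finset.univ.filter (fun i : Fin r => h ≤ (i : ℕ))).powerset.erase ∅,
        (-1 : K) ^ (I.card + 1) * (∏ i ∈ I, (1 - z i)) * (1 - a * t)) := by
  set B := Finset.univ.filter (fun i : Fin r => h ≤ (i : ℕ))
  have hQ : ∏ i ∈ B, z i ≠ 0 :=
    Finset.prod_ne_zero_iff.mpr fun i hi => hz i (Finset.mem_filter.mp hi).2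
  have htQ : t * ∏ i ∈ B, z i = ∏ i ∈ Finset.univ.filter (fun i : Fin r => (i : ℕ) < h), z i := by
    rw [ht, Finset.prod_inv_distrib, inv_mul_cancel_right₀ hQ]
  rw [← Finset.sum_mul]
  simp only [Finset.sum_powerset_erase_empty_neg_one_pow_mul_prod_one_sub]
  linear_combination (1 - ∏ i ∈ B, z i) * t * inv_mul_cancel₀ ha - htQ

/-- **Lemma 7.2 (identity (cavol)).** Let `t = (∏_{i≤h} zᵢ) · (∏_{i>h} zᵢ⁻¹)` and `a ≠ 0`. Then
`1 − t = Σ_{∅≠I⊆{1,…,h}} (−1)^{|I|+1} ∏_{i∈I}(1 − zᵢ)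
       − a⁻¹ Σ_{∅≠I⊆{h+1,…,r}} (−1)^{|I|+1} ∏_{i∈I}(1 − zᵢ)
       + a⁻¹ Σ_{∅≠I⊆{h+1,…,r}} (−1)^{|I|+1} (∏_{i∈I}(1 − zᵢ)) (1 − a t)`. -/
theorem stmt10 {K : Type*} [Field K] (r h : ℕ) (hr : 1 ≤ r) (hh : h ≤ r)
    (z : Fin r → K) (hz : ∀ i : Fin r, h ≤ (i : ℕ) → z i ≠ 0)
    (a : K) (ha : a ≠ 0) (t : K)
    (ht : t = (∏ i ∈ Finset.univ.filter (fun i : Fin r => (i : ℕ) < h), z i) *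
              (∏ i ∈ Finset.univ.filter (fun i : Fin r => h ≤ (i : ℕ)), (z i)⁻¹)) :
    1 - t =
      (∑ I ∈ (Finset.univ.filter (fun i : Fin r => (i : ℕ) < h)).powerset.erase ∅,
        (-1 : K) ^ (I.card + 1) * ∏ i ∈ I, (1 - z i))
      - a⁻¹ * (∑ I ∈ (Finset.univ.filter (fun i : Fin r => h ≤ (i : ℕ))).powerset.erase ∅,
        (-1 : K) ^ (I.card + 1) * ∏ i ∈ I, (1 - z i))
      + a⁻¹ * (∑ I ∈ (Finset.univ.filter (fun i : Fin r => h ≤ (i : ℕ))).powerset.erase ∅,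
        (-1 : K) ^ (I.card + 1) * (∏ i ∈ I, (1 - z i)) * (1 - a * t)) :=
  stmt10_general r h z hz a ha t ht
end

section
/- Let h₁, …, h_m be positive integers and, for n ∈ ℕ, let c_n be the (finite) number of tuples (k₁, …, k_m) ∈ ℕ^m with Σ_{i=1}^m k_i h_i = n. Then c is a quasipolynomial (periodic polynomial) for n ≥ 1: there exist a positive integer M and polynomials p₀, …, p_{M−1} with complex coefficients such that c_n = p_{n mod M}(n) for every integer n ≥ 1. (The solution of the knapsack problem derived in Section 1.1: the partition function is a sum of functions which are polynomials on each coset modulo M.) -/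
/-!
Splitting off the first part `h₀`, the solutions counted by `c (n + h₀)` are those with `k₀ = 0`,
counted by the partition function `c'` of `h₁, …, h_{m-1}` at `n + h₀`, and those with `k₀ ≥ 1`,
in bijection with the solutions counted by `c n`. Hence `Δ_[h₀] c = c' (· + h₀)`, and since
`Δ_[u M]` is a sum of shifts of `Δ_[M]`, an annihilator `Δ_[M]^[d]` of `c'` on `n ≥ 1` yields the
annihilator `Δ_[M h₀]^[d + 1]` of `c`; for `m = 0`, `c` itself vanishes on `n ≥ 1`. On each
residue class `n ≡ r (mod M)`, Gregory–Newton interpolation then writes `c` as a polynomial in `n`.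
-/

open Finset Polynomial fwdDiff

section FwdDiff

variable {G : Type*} [AddCommGroup G]

theorem fwdDiff_mul_apply (f : ℕ → G) (u M x : ℕ) :
    Δ_[u * M] f x = ∑ i ∈ range u, Δ_[M] f (x + i * M) := by
  simpa [fwdDiff, add_mul, add_assoc] using (sum_range_sub (fun i => f (x + i * M)) u).symm

theorem fwdDiff_iter_eq_zero_of_le {f : ℕ → G} {M a d k : ℕ}
    (hf : ∀ n ≥ a, Δ_[M] ^[d] f n = 0) (hdk : d ≤ k) : ∀ n ≥ a, Δ_[M] ^[k] f n = 0 := by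
  induction k, hdk using Nat.le_induction with
  | base => exact hf
  | succ k _ ih =>
    intro n hn
    rw [Function.iterate_succ_apply', fwdDiff, ih n hn, ih (n + M) (by omega), sub_zero]

theorem fwdDiff_iter_mul_eq_zero {f : ℕ → G} {M a d : ℕ}
    (hf : ∀ n ≥ a, Δ_[M] ^[d] f n = 0) (u : ℕ) : ∀ n ≥ a, Δ_[u * M] ^[d] f n = 0 := by
  induction d generalizing f with
  | zero => exact hf
  | succ d ih =>
    intro n hn
    have hsplit : Δ_[u * M] f = ∑ i ∈ range u, fun x => Δ_[M] f (x + i * M) := by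
      ext x
      rw [fwdDiff_mul_apply, Finset.sum_apply]
    rw [Function.iterate_succ_apply, hsplit, fwdDiff_iter_finsetSum, Finset.sum_apply]
    refine sum_eq_zero fun i _ => ?_
    rw [fwdDiff_iter_comp_add]
    exact ih (f := Δ_[M] f) hf _ (by omega)

theorem fwdDiff_iter_succ_eq_zero_of_fwdDiff_eq {f g : ℕ → G} {h M a d : ℕ}
    (hfg : ∀ x, Δ_[h] f x = g (x + h)) (hg : ∀ n ≥ a, Δ_[M] ^[d] g n = 0) :
    ∀ n ≥ a, Δ_[M * h] ^[d + 1] f n = 0 := by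
  intro n hn
  have hsplit : Δ_[M * h] f = ∑ i ∈ range M, fun x => g (x + (i * h + h)) := by
    ext x
    simp only [fwdDiff_mul_apply, hfg, Finset.sum_apply, add_assoc]
  rw [Function.iterate_succ_apply, hsplit, fwdDiff_iter_finsetSum, Finset.sum_apply]
  refine sum_eq_zero fun i _ => ?_
  rw [fwdDiff_iter_comp_add, mul_comm]
  exact fwdDiff_iter_mul_eq_zero hg h _ (by omega)

end FwdDiff

section Quasipolynomial

variable {K : Type*} [Field K] [CharZero K]

theorem exists_polynomial_eval_eq_choose (k : ℕ) :
    ∃ P : K[X], ∀ t : ℕ, P.eval (t : K) = t.choose k := by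
  refine ⟨C (k.factorial : K)⁻¹ * descPochhammer K k, fun t => ?_⟩
  rw [eval_mul, eval_C, descPochhammer_eval_eq_descFactorial,
    Nat.descFactorial_eq_factorial_mul_choose, Nat.cast_mul,
    inv_mul_cancel_left₀ (Nat.cast_ne_zero.2 k.factorial_ne_zero)]

/-- Gregory–Newton interpolation along the progression `b + ℕ M`. -/
theorem exists_polynomial_eval_add_mul {f : ℕ → K} {M b d : ℕ} (hM : M ≠ 0)
    (hf : ∀ n ≥ b, Δ_[M] ^[d] f n = 0) :
    ∃ P : K[X], ∀ t : ℕ, f (b + t * M) = P.eval ((b + t * M : ℕ) : K) := by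
  choose Q hQ using exists_polynomial_eval_eq_choose (K := K)
  refine ⟨∑ k ∈ range d, C (Δ_[M] ^[k] f b) * (Q k).comp (C (M : K)⁻¹ * (X - C (b : K))),
    fun t => ?_⟩
  have ht : (M : K)⁻¹ * (((b + t * M : ℕ) : K) - b) = t := by
    push_cast
    field_simp
    ring
  have hvanish : ∀ k ∈ range (t + 1 + d), k ∉ range d → Δ_[M] ^[k] f b = 0 := fun k _ hk =>
    fwdDiff_iter_eq_zero_of_le hf (by simpa using hk) b le_rfl
  have hchoose : ∀ k ∈ range (t + 1 + d), k ∉ range (t + 1) → t.choose k • Δ_[M] ^[k] f b = 0 :=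
    fun k _ hk => by rw [Nat.choose_eq_zero_of_lt (by simpa [Nat.lt_succ_iff] using hk), zero_smul]
  have hnewton := shift_eq_sum_fwdDiff_iter M f t b
  rw [smul_eq_mul] at hnewton
  rw [hnewton, eval_finsetSum, sum_subset (range_mono (Nat.le_add_right _ _)) hchoose,
    ← sum_subset (range_mono (Nat.le_add_left _ _))
      (fun k hk hk' => by rw [hvanish k hk hk', smul_zero])]
  refine sum_congr rfl fun k _ => ?_
  rw [eval_mul, eval_C, eval_comp, eval_mul, eval_C, eval_sub, eval_X, eval_C, ht, hQ,
    nsmul_eq_mul, mul_comm]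

theorem exists_quasipolynomial_of_fwdDiff_iter_eq_zero {f : ℕ → K} {M d : ℕ} (hM : 0 < M)
    (hf : ∀ n ≥ 1, Δ_[M] ^[d] f n = 0) :
    ∃ p : ℕ → K[X], ∀ n ≥ 1, f n = (p (n % M)).eval (n : K) := by
  -- the least positive element of the residue class `r`
  let base (r : ℕ) : ℕ := if r = 0 then M else r
  have hbase : ∀ r, 1 ≤ base r := fun r => by unfold base; split_ifs <;> omega
  choose p hp using fun r => exists_polynomial_eval_add_mul (b := base r) hM.ne'
    fun n hn => hf n ((hbase r).trans hn)
  refine ⟨p, fun n hn => ?_⟩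
  obtain ⟨t, ht⟩ : ∃ t, n = base (n % M) + t * M := by
    rcases Nat.eq_zero_or_pos (n % M) with h0 | h0
    · obtain ⟨q, rfl⟩ := Nat.dvd_of_mod_eq_zero h0
      obtain _ | q := q
      · omega
      · refine ⟨q, ?_⟩
        simp only [base, h0, if_true]
        ring
    · exact ⟨n / M, by simp [base, h0.ne', Nat.mod_add_div']⟩
  simpa only [← ht] using hp (n % M) t

end Quasipolynomial

noncomputable def knapsackCount {m : ℕ} (h : Fin m → ℕ) (n : ℕ) : ℕ :=
  Nat.card {k : Fin m → ℕ // ∑ i, k i * h i = n}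

theorem finite_knapsack {m : ℕ} {h : Fin m → ℕ} (hpos : ∀ i, 0 < h i) (n : ℕ) :
    Finite {k : Fin m → ℕ // ∑ i, k i * h i = n} := by
  refine Set.Finite.subset (Set.finite_Iic fun _ => n) fun k (hk : _ = n) i => ?_
  calc k i ≤ k i * h i := Nat.le_mul_of_pos_right _ (hpos i)
    _ ≤ ∑ j, k j * h j :=
      single_le_sum (f := fun j => k j * h j) (fun j _ => Nat.zero_le _) (mem_univ i)
    _ = n := hk

theorem knapsackCount_fin_zero_of_pos (h : Fin 0 → ℕ) {n : ℕ} (hn : 0 < n) :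
    knapsackCount h n = 0 := by
  simp [knapsackCount, hn.ne]

def succWeightEquiv {β : Type*} (w : β → ℕ) (h n : ℕ) :
    {p : ℕ × β // p.1 * h + w p.2 = n + h} ≃
      {b : β // w b = n + h} ⊕ {p : ℕ × β // p.1 * h + w p.2 = n} where
  toFun
    | ⟨(0, b), hp⟩ => .inl ⟨b, by simpa using hp⟩
    | ⟨(a + 1, b), hp⟩ => .inr ⟨(a, b), by dsimp only at hp ⊢; rw [add_one_mul] at hp; omega⟩
  invFun := Sum.elim (fun ⟨b, hb⟩ => ⟨(0, b), by simpa using hb⟩)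
    (fun ⟨(a, b), hp⟩ => ⟨(a + 1, b), by dsimp only at hp ⊢; rw [add_one_mul]; omega⟩)
  left_inv := by rintro ⟨⟨_ | a, b⟩, hp⟩ <;> rfl
  right_inv := by rintro (⟨b, hb⟩ | ⟨⟨a, b⟩, hp⟩) <;> rfl

def knapsackConsEquiv {m : ℕ} (h : Fin (m + 1) → ℕ) (n : ℕ) :
    {p : ℕ × (Fin m → ℕ) // p.1 * h 0 + ∑ i, p.2 i * h i.succ = n} ≃
      {k : Fin (m + 1) → ℕ // ∑ i, k i * h i = n} :=
  (Fin.consEquiv fun _ => ℕ).subtypeEquiv fun p => by simp [Fin.sum_univ_succ]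

theorem knapsackCount_add_head {m : ℕ} {h : Fin (m + 1) → ℕ} (hpos : ∀ i, 0 < h i) (n : ℕ) :
    knapsackCount h (n + h 0) =
      knapsackCount (fun i => h i.succ) (n + h 0) + knapsackCount h n := by
  have := finite_knapsack (fun i => hpos i.succ) (n + h 0)
  have := finite_knapsack hpos n
  have := Finite.of_equiv _ (knapsackConsEquiv h n).symm
  rw [knapsackCount, ← Nat.card_congr (knapsackConsEquiv h _),
    Nat.card_congr (succWeightEquiv (fun b : Fin m → ℕ => ∑ i, b i * h i.succ) (h 0) n),
    Nat.card_sum, Nat.card_congr (knapsackConsEquiv h n), knapsackCount, knapsackCount]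

theorem exists_fwdDiff_iter_knapsackCount_eq_zero {G : Type*} [AddCommGroupWithOne G] {m : ℕ}
    {h : Fin m → ℕ} (hpos : ∀ i, 0 < h i) :
    ∃ M, 0 < M ∧ ∃ d, ∀ n ≥ 1, Δ_[M] ^[d] (fun n => (knapsackCount h n : G)) n = 0 := by
  induction m with
  | zero => exact ⟨1, one_pos, 0, fun n hn => by simp [knapsackCount_fin_zero_of_pos h hn]⟩
  | succ m ih =>
    obtain ⟨M, hM, d, hd⟩ := ih (fun i => hpos i.succ)
    refine ⟨M * h 0, Nat.mul_pos hM (hpos 0), d + 1,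
      fwdDiff_iter_succ_eq_zero_of_fwdDiff_eq (fun x => ?_) hd⟩
    rw [fwdDiff, knapsackCount_add_head hpos, Nat.cast_add, add_sub_cancel_right]

/-- **The knapsack problem (Section 1.1).** Given positive integers `h₁,…,h_m`, the partition
function `c_n = #{(k₁,…,k_m) ∈ ℕ^m : Σ kᵢhᵢ = n}` is a periodic polynomial (quasipolynomial)
for `n ≥ 1`: there exist `M > 0` and polynomials `p₀,…,p_{M−1}` over `ℂ` with
`c_n = p_{n mod M}(n)` for all `n ≥ 1`. -/
theorem stmt14 (m : ℕ) (h : Fin m → ℕ) (hpos : ∀ i, 0 < h i)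
    (c : ℕ → ℕ) (hc : ∀ n, c n = Nat.card {k : Fin m → ℕ // ∑ i, k i * h i = n}) :
    ∃ M : ℕ, 0 < M ∧ ∃ p : ℕ → Polynomial ℂ,
      ∀ n : ℕ, 1 ≤ n → (c n : ℂ) = (p (n % M)).eval (n : ℂ) := by
  obtain ⟨M, hM, d, hd⟩ := exists_fwdDiff_iter_knapsackCount_eq_zero (G := ℂ) hpos
  obtain ⟨p, hp⟩ := exists_quasipolynomial_of_fwdDiff_iter_eq_zero hM hd
  exact ⟨M, hM, p, fun n hn => by rw [hc]; exact hp n hn⟩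
end

section
/- Let A = AddMonoidAlgebra ℂ (Fin r → ℤ) be the ring of Laurent polynomials in r variables over ℂ, with basis elements e^λ for λ ∈ ℤ^r, and for i = 1, …, r let ∂_i : A → A be the ℂ-linear map determined by ∂_i(e^λ) = λ_i · e^λ (the invariant derivation x_i ∂/∂x_i). Then for f ∈ A the following are equivalent: (a) the coefficient of f at λ = 0 (the constant term) is zero; (b) there exist g₁, …, g_r ∈ A with f = Σ_{i=1}^r ∂_i(g_i). (The algebraic content of the Lemma in Section 6 computing the top De Rham cohomology: the exact top forms f·ω are exactly those with vanishing constant term, and the residue of f is its constant term.) -/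
/-!
The operators `∂ᵢ` are diagonal in the monomial basis, so they act on coefficients:
`(∂ᵢ g)_λ = λᵢ g_λ`. Hence every `∂ᵢ g` has zero constant term. Conversely, if `f₀ = 0`,
the elements `gᵢ` with coefficients `λᵢ f_λ / |λ|²` satisfy `Σᵢ ∂ᵢ gᵢ = f`, since
`Σᵢ λᵢ² = |λ|²` is invertible for `λ ≠ 0`: this inverts the Laplacian `Σᵢ ∂ᵢ²` off the origin.
-/

namespace AddMonoidAlgebra

section Diagonal

variable {k G : Type*} [CommSemiring k]

noncomputable def scaleCoeff (ψ : G → k) (f : AddMonoidAlgebra k G) : AddMonoidAlgebra k G :=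
  ofCoeff <| Finsupp.onFinset f.coeff.support (fun μ ↦ ψ μ * f.coeff μ)
    fun _ h ↦ Finsupp.mem_support_iff.2 (right_ne_zero_of_mul h)

@[simp]
lemma coeff_scaleCoeff (ψ : G → k) (f : AddMonoidAlgebra k G) (μ : G) :
    (scaleCoeff ψ f).coeff μ = ψ μ * f.coeff μ :=
  rfl

lemma coeff_apply_of_apply_single {ψ : G → k}
    (D : AddMonoidAlgebra k G →ₗ[k] AddMonoidAlgebra k G)
    (hD : ∀ μ, D (single μ 1) = ψ μ • single μ 1) (f : AddMonoidAlgebra k G) (μ : G) :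
    (D f).coeff μ = ψ μ * f.coeff μ := by
  induction f using induction_linear with
  | zero => simp
  | add f g hf hg => simp [coeff_add, hf, hg, mul_add]
  | single ν c =>
    have hsingle : single ν c = c • single ν (1 : k) := by rw [smul_single', mul_one]
    rw [hsingle, map_smul, hD, smul_smul, coeff_smul_apply, coeff_smul_apply, coeff_single]
    rcases eq_or_ne ν μ with rfl | h
    · simp [mul_comm]
    · simp [h]

end Diagonal

section Torus

variable {k ι : Type*} [Fintype ι]

lemma coeff_zero_sum_apply_eq_zero [CommRing k]
    (D : ι → AddMonoidAlgebra k (ι → ℤ) →ₗ[k] AddMonoidAlgebra k (ι → ℤ))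
    (hD : ∀ i μ, D i (single μ 1) = (μ i : k) • single μ 1)
    (g : ι → AddMonoidAlgebra k (ι → ℤ)) :
    (∑ i, D i (g i)).coeff 0 = 0 := by
  simp [coeff_sum, Finsupp.finsetSum_apply, coeff_apply_of_apply_single _ (hD _)]

lemma exists_sum_apply_eq_of_coeff_zero_eq_zero [Field k] [CharZero k]
    (D : ι → AddMonoidAlgebra k (ι → ℤ) →ₗ[k] AddMonoidAlgebra k (ι → ℤ))
    (hD : ∀ i μ, D i (single μ 1) = (μ i : k) • single μ 1)
    {f : AddMonoidAlgebra k (ι → ℤ)} (hf : f.coeff 0 = 0) :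
    ∃ g : ι → AddMonoidAlgebra k (ι → ℤ), f = ∑ i, D i (g i) := by
  refine ⟨fun i ↦ scaleCoeff (fun μ ↦ (μ i : k) / ((∑ j, μ j ^ 2 : ℤ) : k)) f, ?_⟩
  ext μ
  simp only [coeff_sum, Finsupp.finsetSum_apply, coeff_apply_of_apply_single _ (hD _),
    coeff_scaleCoeff]
  rcases eq_or_ne μ 0 with rfl | hμ
  · simp [hf]
  have hnorm : ((∑ j, μ j ^ 2 : ℤ) : k) ≠ 0 := by
    refine Int.cast_ne_zero.2 fun h ↦ hμ (funext fun j ↦ ?_)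
    have := (Finset.sum_eq_zero_iff_of_nonneg fun j _ ↦ sq_nonneg (μ j)).1 h j (Finset.mem_univ j)
    simpa using this
  have hsum : ∑ i, (μ i : k) * ((μ i : k) / ((∑ j, μ j ^ 2 : ℤ) : k)) = 1 := by
    simp_rw [mul_div_assoc', ← sq]
    rw [← Finset.sum_div, div_eq_one_iff_eq hnorm]
    push_cast
    rfl
  simp_rw [← mul_assoc]
  rw [← Finset.sum_mul, hsum, one_mul]

end Torus

end AddMonoidAlgebra

/-- **Top De Rham cohomology of the torus (Section 6).** Let `A = ℂ[x₁^{±1},…,x_r^{±1}]`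
be the Laurent polynomial ring, realized as `AddMonoidAlgebra ℂ (ℤ^r)`, and for each `i`
let `∂ᵢ` be the ℂ-linear map determined by `∂ᵢ(e^λ) = λᵢ e^λ` (i.e. `xᵢ ∂/∂xᵢ`). Then a
Laurent polynomial `f` has zero constant term (coefficient at `λ = 0`) if and only if
`f = Σᵢ ∂ᵢ(gᵢ)` for some `g₁,…,g_r ∈ A`. -/
theorem stmt17 (r : ℕ)
    (D : Fin r → (AddMonoidAlgebra ℂ (Fin r → ℤ) →ₗ[ℂ] AddMonoidAlgebra ℂ (Fin r → ℤ)))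
    (hD : ∀ (i : Fin r) (lam : Fin r → ℤ),
      D i (AddMonoidAlgebra.single lam 1) = (lam i : ℂ) • AddMonoidAlgebra.single lam 1)
    (f : AddMonoidAlgebra ℂ (Fin r → ℤ)) :
    f.coeff 0 = 0 ↔ ∃ g : Fin r → AddMonoidAlgebra ℂ (Fin r → ℤ), f = ∑ i, D i (g i) :=
  ⟨AddMonoidAlgebra.exists_sum_apply_eq_of_coeff_zero_eq_zero D hD,
    fun ⟨g, hg⟩ ↦ hg ▸ AddMonoidAlgebra.coeff_zero_sum_apply_eq_zero D hD g⟩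
end
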